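/- arXiv:1907.05018 — 6 statements merged into one kernel-verified Lean document; each statement's English description precedes it below -/
import Mathlib

section
/- A finite connected simple graph G is a complete split graph if and only if G contains no induced subgraph isomorphic to any of P4, C4, or the paw. -/
/-!
A graph is complete split exactly when every edge has a universal endpoint: the universal
vertices form the clique and the others the stable set. Each of `P₄`, `C₄` and the paw has an
edge with no universal endpoint, and an induced embedding carries non-universal vertices to
non-universal ones, so complete split graphs avoid all three.

Conversely, in a connected `P₄`- and paw-free graph every vertex `c` outside an edge `ab` is
adjacent to `a` or `b`: walk from `c` towards `a`; if the next vertex `x` sees `a` or `b` but `c`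
sees neither, then `c, x, a, b` span a `P₄` or a paw. Now if `a b` were an edge with
non-neighbours `c` of `a` and `d` of `b`, this forces `c ~ b`, `d ~ a` and `d ~ c`, and
`a, b, c, d` span a `C₄`.
-/

open SimpleGraph

/-- `G` contains no induced subgraph isomorphic to `H`. -/
def IndFree {V : Type*} {W : Type*} (G : SimpleGraph V) (H : SimpleGraph W) : Prop :=
  IsEmpty (H ↪g G)

/-- A complete split graph: a split graph in which every vertex of the stable
set is adjacent to every vertex of the clique. -/
def IsCompleteSplit {V : Type*} (G : SimpleGraph V) : Prop :=
  ∃ S K : Set V, S ∪ K = Set.univ ∧ Disjoint S K ∧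
    (S.Pairwise fun a b => ¬ G.Adj a b) ∧ G.IsClique K ∧
    ∀ a ∈ S, ∀ b ∈ K, G.Adj a b

/-- The paw: vertices `a,b,c,d = 0,1,2,3`, edges `ab, bc, ca, ad`. -/
def pawGraph : SimpleGraph (Fin 4) :=
  fromEdgeSet {s(0,1), s(1,2), s(2,0), s(0,3)}

namespace SimpleGraph

variable {V W : Type*} {G : SimpleGraph V} {H : SimpleGraph W}

theorem IsUniversal.of_embedding (f : H ↪g G) {v : W} (h : G.IsUniversal (f v)) :
    H.IsUniversal v :=
  fun _ hvw => f.map_adj_iff.1 (h (f.injective.ne hvw))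

theorem isCompleteSplit_iff_forall_adj :
    IsCompleteSplit G ↔ ∀ ⦃a b⦄, G.Adj a b → G.IsUniversal a ∨ G.IsUniversal b := by
  constructor
  · rintro ⟨S, K, hcover, -, hS, hK, hSK⟩ a b hab
    have hmem : ∀ v, v ∈ S ∪ K := fun v => hcover.symm ▸ Set.mem_univ v
    have hK_univ : ∀ v ∈ K, G.IsUniversal v := fun v hv w hvw =>
      (hmem w).elim (fun hw => (hSK w hw v hv).symm) (fun hw => hK hv hw hvw)
    have hS_of_not_univ : ∀ v, ¬ G.IsUniversal v → v ∈ S := fun v hv =>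
      (hmem v).resolve_right fun hvK => hv (hK_univ v hvK)
    by_contra! ⟨ha, hb⟩
    exact hS (hS_of_not_univ a ha) (hS_of_not_univ b hb) hab.ne hab
  · intro h
    refine ⟨G.universalVertsᶜ, G.universalVerts, Set.compl_union_self _, disjoint_compl_left,
      fun a ha b hb _ hab => (h hab).elim ha hb, G.isClique_universalVerts,
      fun a ha b hb => (hb ?_).symm⟩
    rintro rfl
    exact ha hb

theorem not_isUniversal_of_not_adj {v w : V} (hvw : v ≠ w) (h : ¬ G.Adj v w) :
    ¬ G.IsUniversal v :=
  fun hv => h (hv hvw)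

theorem indFree_of_adj_not_isUniversal
    (hG : ∀ ⦃a b⦄, G.Adj a b → G.IsUniversal a ∨ G.IsUniversal b) {i j : W} (hij : H.Adj i j)
    (hi : ¬ H.IsUniversal i) (hj : ¬ H.IsUniversal j) : IndFree G H :=
  ⟨fun f => (hG (f.map_adj_iff.2 hij)).elim (hi ∘ .of_embedding f) (hj ∘ .of_embedding f)⟩

theorem not_indFree_of_induced (f : W → V) (hf : Function.Injective f)
    (hadj : ∀ i j, G.Adj (f i) (f j) ↔ H.Adj i j) : ¬ IndFree G H :=
  fun hfree => hfree.false ⟨⟨f, hf⟩, hadj _ _⟩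

theorem not_indFree_pathGraph_four {a b c d : V} (hab : G.Adj a b) (hbc : G.Adj b c)
    (hcd : G.Adj c d) (hac : ¬ G.Adj a c) (hbd : ¬ G.Adj b d) (had : ¬ G.Adj a d) :
    ¬ IndFree G (pathGraph 4) := by
  have : a ≠ c := by rintro rfl; exact had hcd
  have : b ≠ d := by rintro rfl; exact had hab
  have : a ≠ d := by rintro rfl; exact hac hcd.symm
  refine not_indFree_of_induced ![a, b, c, d] (fun i j => ?_) fun i j => ?_
  · fin_cases i <;> fin_cases j <;> simp_all [eq_comm, hab.ne, hbc.ne, hcd.ne]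
  · fin_cases i <;> fin_cases j <;> simp_all [pathGraph_adj, G.adj_comm]

theorem not_indFree_cycleGraph_four {a b c d : V} (hab : G.Adj a b) (hbc : G.Adj b c)
    (hcd : G.Adj c d) (hda : G.Adj d a) (hac : ¬ G.Adj a c) (hbd : ¬ G.Adj b d)
    (hne_ac : a ≠ c) (hne_bd : b ≠ d) : ¬ IndFree G (cycleGraph 4) := by
  refine not_indFree_of_induced ![a, b, c, d] (fun i j => ?_) fun i j => ?_
  · fin_cases i <;> fin_cases j <;> simp_all [eq_comm, hab.ne, hbc.ne, hcd.ne, hda.ne']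
  · fin_cases i <;> fin_cases j <;> simp_all [G.adj_comm] <;> decide

theorem not_indFree_pawGraph {x a b c : V} (hxa : G.Adj x a) (hxb : G.Adj x b)
    (hxc : G.Adj x c) (hab : G.Adj a b) (hca : ¬ G.Adj c a) (hcb : ¬ G.Adj c b) :
    ¬ IndFree G pawGraph := by
  have : a ≠ c := by rintro rfl; exact hcb hab
  have : b ≠ c := by rintro rfl; exact hca hab.symm
  refine not_indFree_of_induced ![x, a, b, c] (fun i j => ?_) fun i j => ?_
  · fin_cases i <;> fin_cases j <;> simp_all [eq_comm, hab.ne, hxa.ne, hxb.ne, hxc.ne]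
  · fin_cases i <;> fin_cases j <;> simp_all [pawGraph, G.adj_comm]

theorem adj_or_adj_of_reachable (hP4 : IndFree G (pathGraph 4)) (hpaw : IndFree G pawGraph)
    {a b c : V} (hab : G.Adj a b) (hc : G.Reachable c a) (hca : c ≠ a) (hcb : c ≠ b) :
    G.Adj c a ∨ G.Adj c b := by
  obtain ⟨p⟩ := hc
  induction p with
  | nil => exact absurd rfl hca
  | @cons c x a hcx q ih =>
    rcases eq_or_ne x a with rfl | hxa
    · exact .inl hcx
    rcases eq_or_ne x b with rfl | hxb
    · exact .inr hcx
    by_contra! ⟨hnca, hncb⟩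
    by_cases hadj_xa : G.Adj x a <;> by_cases hadj_xb : G.Adj x b
    · exact not_indFree_pawGraph hadj_xa hadj_xb hcx.symm hab hnca hncb hpaw
    · exact not_indFree_pathGraph_four hcx hadj_xa hab hnca hadj_xb hncb hP4
    · exact not_indFree_pathGraph_four hcx hadj_xb hab.symm hncb hadj_xa hnca hP4
    · exact (ih hab hxa hxb).elim hadj_xa hadj_xb

theorem Connected.isUniversal_or_isUniversal_of_adj (hconn : G.Connected)
    (hP4 : IndFree G (pathGraph 4)) (hC4 : IndFree G (cycleGraph 4)) (hpaw : IndFree G pawGraph)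
    {a b : V} (hab : G.Adj a b) : G.IsUniversal a ∨ G.IsUniversal b := by
  by_contra! ⟨ha, hb⟩
  simp only [IsUniversal, not_forall, exists_prop] at ha hb
  obtain ⟨c, hac, hnac⟩ := ha
  obtain ⟨d, hbd, hnbd⟩ := hb
  have hcb : G.Adj c b := (adj_or_adj_of_reachable hP4 hpaw hab (hconn c a) hac.symm
    (by rintro rfl; exact hnac hab)).resolve_left fun h => hnac h.symm
  have hda : G.Adj d a := (adj_or_adj_of_reachable hP4 hpaw hab.symm (hconn d b) hbd.symm
    (by rintro rfl; exact hnbd hab.symm)).resolve_left fun h => hnbd h.symm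
  have hdc : G.Adj d c := (adj_or_adj_of_reachable hP4 hpaw hcb.symm (hconn d b) hbd.symm
    (by rintro rfl; exact hnbd hcb.symm)).resolve_left fun h => hnbd h.symm
  exact not_indFree_cycleGraph_four hab hcb.symm hdc.symm hda hnac hnbd hac hbd hC4

end SimpleGraph

theorem stmt_1_general {V : Type*} (G : SimpleGraph V) (hconn : G.Connected) :
    IsCompleteSplit G ↔
      IndFree G (pathGraph 4) ∧ IndFree G (cycleGraph 4) ∧ IndFree G pawGraph := by
  rw [isCompleteSplit_iff_forall_adj]
  constructor
  · intro h
    refine ⟨indFree_of_adj_not_isUniversal h (i := 1) (j := 2) (by simp [pathGraph_adj])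
        (not_isUniversal_of_not_adj (w := 3) (by decide) (by simp [pathGraph_adj]))
        (not_isUniversal_of_not_adj (w := 0) (by decide) (by simp [pathGraph_adj])),
      indFree_of_adj_not_isUniversal h (i := 0) (j := 1) (by decide)
        (not_isUniversal_of_not_adj (w := 2) (by decide) (by decide))
        (not_isUniversal_of_not_adj (w := 3) (by decide) (by decide)),
      indFree_of_adj_not_isUniversal h (i := 1) (j := 2) (by simp [pawGraph])
        (not_isUniversal_of_not_adj (w := 3) (by decide) (by simp [pawGraph]))
        (not_isUniversal_of_not_adj (w := 3) (by decide) (by simp [pawGraph]))⟩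
  · exact fun ⟨hP4, hC4, hpaw⟩ _ _ => hconn.isUniversal_or_isUniversal_of_adj hP4 hC4 hpaw

theorem stmt_1 {V : Type*} [Fintype V] (G : SimpleGraph V) (hconn : G.Connected) :
    IsCompleteSplit G ↔
      IndFree G (pathGraph 4) ∧ IndFree G (cycleGraph 4) ∧ IndFree G pawGraph :=
  stmt_1_general G hconn
end

section
/- A finite connected simple graph G contains no induced subgraph isomorphic to K2 ∪ K1 (the disjoint union of an edge and an isolated vertex) if and only if G contains no induced subgraph isomorphic to P4 and no induced subgraph isomorphic to the paw. -/
open SimpleGraph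

/-- `K2 ∪ K1`: an edge together with an isolated vertex. -/
def K2PlusK1 : SimpleGraph (Fin 3) := fromEdgeSet {s(0,1)}

lemma K2_adj (i j : Fin 3) : K2PlusK1.Adj i j ↔ (i = 0 ∧ j = 1) ∨ (i = 1 ∧ j = 0) := by
  simp [K2PlusK1, fromEdgeSet_adj, Sym2.eq_iff]
  aesop

lemma paw_adj (i j : Fin 4) : pawGraph.Adj i j ↔
    ((i,j) = (0,1) ∨ (i,j) = (1,0) ∨ (i,j) = (1,2) ∨ (i,j) = (2,1) ∨
     (i,j) = (2,0) ∨ (i,j) = (0,2) ∨ (i,j) = (0,3) ∨ (i,j) = (3,0)) := by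
  simp [pawGraph, fromEdgeSet_adj, Sym2.eq_iff, Prod.ext_iff]
  aesop

/-- embed K2+K1 into P4 -/
def embK2P4 : K2PlusK1 ↪g pathGraph 4 where
  toFun := ![0, 1, 3]
  inj' := by intro i j; fin_cases i <;> fin_cases j <;> simp [Fin.ext_iff] <;> decide
  map_rel_iff' := by
    intro i j
    fin_cases i <;> fin_cases j <;>
      simp [DFunLike.coe, pathGraph_adj, K2_adj] <;> omega

def embK2Paw : K2PlusK1 ↪g pawGraph where
  toFun := ![1, 2, 3]
  inj' := by intro i j; fin_cases i <;> fin_cases j <;> simp [Fin.ext_iff] <;> decide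
  map_rel_iff' := by
    intro i j
    fin_cases i <;> fin_cases j <;>
      simp [DFunLike.coe, paw_adj, K2_adj, Prod.ext_iff] <;> omega

lemma p4_embed {V : Type*} {G : SimpleGraph V} {a b c d : V}
    (hab : G.Adj a b) (hbc : G.Adj b c) (hcd : G.Adj c d)
    (hac : ¬G.Adj a c) (had : ¬G.Adj a d) (hbd : ¬G.Adj b d)
    (nac : a ≠ c) (nad : a ≠ d) (nbd : b ≠ d) :
    Nonempty (pathGraph 4 ↪g G) := by
  have hba := hab.symm; have hcb := hbc.symm; have hdc := hcd.symm
  have hca : ¬G.Adj c a := fun h => hac h.symm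
  have hda : ¬G.Adj d a := fun h => had h.symm
  have hdb : ¬G.Adj d b := fun h => hbd h.symm
  refine ⟨⟨⟨![a,b,c,d], ?_⟩, ?_⟩⟩
  · intro i j
    fin_cases i <;> fin_cases j <;>
      simp_all [hab.ne, hbc.ne, hcd.ne, nac, nad, nbd, hab.ne', hbc.ne', hcd.ne',
        nac.symm, nad.symm, nbd.symm]
  · intro i j
    fin_cases i <;> fin_cases j <;> simp_all [DFunLike.coe, pathGraph_adj] <;> omega

lemma paw_embed {V : Type*} {G : SimpleGraph V} {a b c d : V}
    (hab : G.Adj a b) (hbc : G.Adj b c) (hca : G.Adj c a) (had : G.Adj a d)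
    (hbd : ¬G.Adj b d) (hcd : ¬G.Adj c d)
    (nbd : b ≠ d) (ncd : c ≠ d) :
    Nonempty (pawGraph ↪g G) := by
  have hba := hab.symm; have hcb := hbc.symm; have hac := hca.symm; have hda := had.symm
  have hdb : ¬G.Adj d b := fun h => hbd h.symm
  have hdc : ¬G.Adj d c := fun h => hcd h.symm
  refine ⟨⟨⟨![a,b,c,d], ?_⟩, ?_⟩⟩
  · intro i j
    fin_cases i <;> fin_cases j <;>
      simp_all [hab.ne, hbc.ne, hca.ne, had.ne, nbd, ncd, hab.ne', hbc.ne', hca.ne', had.ne', nbd.symm, ncd.symm]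
  · intro i j
    fin_cases i <;> fin_cases j <;> simp_all [DFunLike.coe, paw_adj, Prod.ext_iff]

lemma pivot {V : Type*} {G : SimpleGraph V} :
    ∀ {z u : V}, G.Walk z u → ∀ v, G.Adj u v → ¬G.Adj z u → ¬G.Adj z v →
    ∃ p q, G.Adj p q ∧ ¬G.Adj p u ∧ ¬G.Adj p v ∧ (G.Adj q u ∨ G.Adj q v) := by
  intro z u w
  induction w with
  | nil => intro v huv _ h2; exact absurd huv h2
  | @cons z z' u h w ih =>
    intro v huv h1 h2
    by_cases hq : G.Adj z' u ∨ G.Adj z' v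
    · exact ⟨z, z', h, h1, h2, hq⟩
    · push_neg at hq
      exact ih v huv hq.1 hq.2

theorem stmt_2 {V : Type*} [Fintype V] (G : SimpleGraph V) (hconn : G.Connected) :
    IndFree G K2PlusK1 ↔ IndFree G (pathGraph 4) ∧ IndFree G pawGraph := by
  constructor
  · intro h
    exact ⟨⟨fun f => h.false (f.comp embK2P4)⟩, ⟨fun f => h.false (f.comp embK2Paw)⟩⟩
  · rintro ⟨hP4, hPaw⟩
    constructor
    intro f
    set u := f 0 with hu
    set v := f 1 with hv
    set w := f 2 with hw
    have huv : G.Adj u v := f.map_rel_iff.2 ((K2_adj 0 1).2 (by simp))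
    have hwu : ¬G.Adj w u := by
      intro h
      have := f.map_rel_iff.1 h
      rw [K2_adj] at this; simp at this
    have hwv : ¬G.Adj w v := by
      intro h
      have := f.map_rel_iff.1 h
      rw [K2_adj] at this; simp at this
    obtain ⟨wk⟩ := hconn.preconnected w u
    obtain ⟨p, q, hpq, hpu, hpv, hq⟩ := pivot wk v huv hwu hwv
    have hqu : q ≠ u := fun h => hpu (h ▸ hpq)
    have hqv : q ≠ v := fun h => hpv (h ▸ hpq)
    have hpu' : p ≠ u := fun h => hpv (h ▸ huv)
    have hpv' : p ≠ v := fun h => hpu (h ▸ huv.symm)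
    by_cases h1 : G.Adj q u <;> by_cases h2 : G.Adj q v
    · -- paw: triangle q u v, pendant p on q
      exact hPaw.false (paw_embed h1 huv h2.symm hpq.symm (fun h => hpu h.symm) (fun h => hpv h.symm) hpu'.symm hpv'.symm |>.some)
    · -- P4 : p q u v
      exact hP4.false (p4_embed hpq h1 huv (fun h => hpu h) hpv (fun h => h2 h)
        hpu' hpv' hqv |>.some)
    · -- P4 : p q v u
      exact hP4.false (p4_embed hpq h2 huv.symm hpv hpu (fun h => h1 h)
        hpv' hpu' hqu |>.some)
    · tauto
end

section
/- Every finite connected simple graph G that contains no induced subgraph isomorphic to Q2 has a dominating set D such that the subgraph of G induced by D is connected and C4-free. -/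
open SimpleGraph

/-- `D` is a dominating set of `G`. -/
def IsDomSet {V : Type*} (G : SimpleGraph V) (D : Set V) : Prop :=
  ∀ v ∉ D, ∃ d ∈ D, G.Adj v d

/-- `Q2`: a `C4` (on `0..3`) with a leaf attached to each vertex. -/
def graphQ2 : SimpleGraph (Fin 8) :=
  fromEdgeSet {s(0,1), s(1,2), s(2,3), s(3,0), s(0,4), s(1,5), s(2,6), s(3,7)}

def q2rel (a b : Fin 8) : Prop :=
  (a,b) ∈ [((0:Fin 8),(1:Fin 8)),(1,2),(2,3),(3,0),(0,4),(1,5),(2,6),(3,7)] ∨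
  (b,a) ∈ [((0:Fin 8),(1:Fin 8)),(1,2),(2,3),(3,0),(0,4),(1,5),(2,6),(3,7)]

instance : DecidableRel q2rel := fun _ _ => by unfold q2rel; infer_instance

lemma q2_iff : ∀ a b : Fin 8, graphQ2.Adj a b ↔ q2rel a b := by
  have key : ∀ a b : Fin 8,
      ((s(a,b) ∈ ({s(0,1), s(1,2), s(2,3), s(3,0), s(0,4), s(1,5), s(2,6), s(3,7)} :
        Set (Sym2 (Fin 8)))) ∧ a ≠ b) ↔ q2rel a b := by
    simp only [Set.mem_insert_iff, Set.mem_singleton_iff, Sym2.eq_iff]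
    decide
  intro a b
  rw [graphQ2, SimpleGraph.fromEdgeSet_adj]
  exact key a b

instance : DecidableRel graphQ2.Adj := fun a b => decidable_of_iff _ (q2_iff a b).symm

set_option maxHeartbeats 1600000 in
set_option linter.unusedVariables false in
lemma buildQ2 {V : Type*} (G : SimpleGraph V) (hfree : IndFree G graphQ2)
    (v0 v1 v2 v3 l0 l1 l2 l3 : V)
    (A01 : G.Adj v0 v1) (A12 : G.Adj v1 v2) (A23 : G.Adj v2 v3) (A30 : G.Adj v3 v0) (B0 : G.Adj v0 l0) (B1 : G.Adj v1 l1) (B2 : G.Adj v2 l2) (B3 : G.Adj v3 l3)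
    (N02 : ¬ G.Adj v0 v2) (N13 : ¬ G.Adj v1 v3) (L01 : ¬ G.Adj l0 v1) (L02 : ¬ G.Adj l0 v2) (L03 : ¬ G.Adj l0 v3) (L10 : ¬ G.Adj l1 v0) (L12 : ¬ G.Adj l1 v2) (L13 : ¬ G.Adj l1 v3) (L20 : ¬ G.Adj l2 v0) (L21 : ¬ G.Adj l2 v1) (L23 : ¬ G.Adj l2 v3) (L30 : ¬ G.Adj l3 v0) (L31 : ¬ G.Adj l3 v1) (L32 : ¬ G.Adj l3 v2) (M01 : ¬ G.Adj l0 l1) (M02 : ¬ G.Adj l0 l2) (M03 : ¬ G.Adj l0 l3) (M12 : ¬ G.Adj l1 l2) (M13 : ¬ G.Adj l1 l3) (M23 : ¬ G.Adj l2 l3)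
    (D02 : v0 ≠ v2) (D13 : v1 ≠ v3) (E01 : l0 ≠ v1) (E02 : l0 ≠ v2) (E03 : l0 ≠ v3) (E10 : l1 ≠ v0) (E12 : l1 ≠ v2) (E13 : l1 ≠ v3) (E20 : l2 ≠ v0) (E21 : l2 ≠ v1) (E23 : l2 ≠ v3) (E30 : l3 ≠ v0) (E31 : l3 ≠ v1) (E32 : l3 ≠ v2) (F01 : l0 ≠ l1) (F02 : l0 ≠ l2) (F03 : l0 ≠ l3) (F12 : l1 ≠ l2) (F13 : l1 ≠ l3) (F23 : l2 ≠ l3)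
    : False := by
  have A01s : G.Adj v1 v0 := A01.symm
  have A12s : G.Adj v2 v1 := A12.symm
  have A23s : G.Adj v3 v2 := A23.symm
  have A30s : G.Adj v0 v3 := A30.symm
  have B0s : G.Adj l0 v0 := B0.symm
  have B1s : G.Adj l1 v1 := B1.symm
  have B2s : G.Adj l2 v2 := B2.symm
  have B3s : G.Adj l3 v3 := B3.symm
  have A01n : v0 ≠ v1 := A01.ne
  have A12n : v1 ≠ v2 := A12.ne
  have A23n : v2 ≠ v3 := A23.ne
  have A30n : v3 ≠ v0 := A30.ne
  have B0n : v0 ≠ l0 := B0.ne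
  have B1n : v1 ≠ l1 := B1.ne
  have B2n : v2 ≠ l2 := B2.ne
  have B3n : v3 ≠ l3 := B3.ne
  have A01n' : v1 ≠ v0 := A01.ne'
  have A12n' : v2 ≠ v1 := A12.ne'
  have A23n' : v3 ≠ v2 := A23.ne'
  have A30n' : v0 ≠ v3 := A30.ne'
  have B0n' : l0 ≠ v0 := B0.ne'
  have B1n' : l1 ≠ v1 := B1.ne'
  have B2n' : l2 ≠ v2 := B2.ne'
  have B3n' : l3 ≠ v3 := B3.ne'
  have N02s : ¬ G.Adj v2 v0 := fun h => N02 h.symm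
  have N13s : ¬ G.Adj v3 v1 := fun h => N13 h.symm
  have L01s : ¬ G.Adj v1 l0 := fun h => L01 h.symm
  have L02s : ¬ G.Adj v2 l0 := fun h => L02 h.symm
  have L03s : ¬ G.Adj v3 l0 := fun h => L03 h.symm
  have L10s : ¬ G.Adj v0 l1 := fun h => L10 h.symm
  have L12s : ¬ G.Adj v2 l1 := fun h => L12 h.symm
  have L13s : ¬ G.Adj v3 l1 := fun h => L13 h.symm
  have L20s : ¬ G.Adj v0 l2 := fun h => L20 h.symm
  have L21s : ¬ G.Adj v1 l2 := fun h => L21 h.symm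
  have L23s : ¬ G.Adj v3 l2 := fun h => L23 h.symm
  have L30s : ¬ G.Adj v0 l3 := fun h => L30 h.symm
  have L31s : ¬ G.Adj v1 l3 := fun h => L31 h.symm
  have L32s : ¬ G.Adj v2 l3 := fun h => L32 h.symm
  have M01s : ¬ G.Adj l1 l0 := fun h => M01 h.symm
  have M02s : ¬ G.Adj l2 l0 := fun h => M02 h.symm
  have M03s : ¬ G.Adj l3 l0 := fun h => M03 h.symm
  have M12s : ¬ G.Adj l2 l1 := fun h => M12 h.symm
  have M13s : ¬ G.Adj l3 l1 := fun h => M13 h.symm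
  have M23s : ¬ G.Adj l3 l2 := fun h => M23 h.symm
  have D02s : v2 ≠ v0 := D02.symm
  have D13s : v3 ≠ v1 := D13.symm
  have E01s : v1 ≠ l0 := E01.symm
  have E02s : v2 ≠ l0 := E02.symm
  have E03s : v3 ≠ l0 := E03.symm
  have E10s : v0 ≠ l1 := E10.symm
  have E12s : v2 ≠ l1 := E12.symm
  have E13s : v3 ≠ l1 := E13.symm
  have E20s : v0 ≠ l2 := E20.symm
  have E21s : v1 ≠ l2 := E21.symm
  have E23s : v3 ≠ l2 := E23.symm
  have E30s : v0 ≠ l3 := E30.symm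
  have E31s : v1 ≠ l3 := E31.symm
  have E32s : v2 ≠ l3 := E32.symm
  have F01s : l1 ≠ l0 := F01.symm
  have F02s : l2 ≠ l0 := F02.symm
  have F03s : l3 ≠ l0 := F03.symm
  have F12s : l2 ≠ l1 := F12.symm
  have F13s : l3 ≠ l1 := F13.symm
  have F23s : l3 ≠ l2 := F23.symm
  have hirr : ∀ x : V, ¬ G.Adj x x := fun x => G.irrefl
  let f : Fin 8 → V := fun i => match i with
    | 0 => v0 | 1 => v1 | 2 => v2 | 3 => v3 | 4 => l0 | 5 => l1 | 6 => l2 | 7 => l3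
  have hinj : Function.Injective f := by
    intro a b h
    fin_cases a <;> fin_cases b <;>
      first
        | rfl
        | exact absurd h (by assumption)
  have hrel : ∀ a b : Fin 8, G.Adj (f a) (f b) ↔ graphQ2.Adj a b := by
    intro a b
    constructor
    · intro h
      fin_cases a <;> fin_cases b <;>
        first
          | decide
          | exact absurd h (by assumption)
          | exact absurd h (hirr _)
    · intro h
      fin_cases a <;> fin_cases b <;>
        first
          | assumption
          | exact absurd h (by decide)
  exact hfree.elim ⟨⟨f, hinj⟩, fun {a b} => hrel a b⟩

section helpers
variable {V : Type*} (G : SimpleGraph V)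

lemma connected_induce_univ (h : G.Connected) : (G.induce (Set.univ : Set V)).Connected :=
  (Iso.connected_iff (induceUnivIso G)).mpr h

lemma connected_insert_pendant {A : Set V} (hA : (G.induce A).Connected) {s d : V}
    (hd : d ∈ A) (hadj : G.Adj s d) : (G.induce (insert s A)).Connected := by
  have hle : A ≤ insert s A := Set.subset_insert s A
  have hmap : ∀ x y : A, (G.induce A).Reachable x y →
      (G.induce (insert s A)).Reachable ⟨x.1, hle x.2⟩ ⟨y.1, hle y.2⟩ := by
    intro x y hxy
    have := hxy.map (G.induceHomOfLE hle).toHom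
    exact this
  constructor
  intro x y
  have key : ∀ z : (insert s A : Set V),
      (G.induce (insert s A)).Reachable z ⟨d, hle hd⟩ := by
    rintro ⟨z, hz⟩
    rcases Set.mem_insert_iff.mp hz with h1 | h2
    · by_cases hzA : z ∈ A
      · exact hmap ⟨z, hzA⟩ ⟨d, hd⟩ (hA.preconnected _ _)
      · have hadjz : (G.induce (insert s A)).Adj ⟨z, hz⟩ ⟨d, hle hd⟩ := by
          exact h1 ▸ hadj
        exact hadjz.reachable
    · exact hmap ⟨z, h2⟩ ⟨d, hd⟩ (hA.preconnected _ _)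
  exact (key x).trans (key y).symm

lemma exists_cross {A : Set V} {a t : V} (htA : t ∈ A) (hta : t ≠ a) :
    ∀ (u : A) (p : (G.induce A).Walk u ⟨t, htA⟩) (hua : (u : V) ≠ a),
    ¬ (G.induce (A \ {a})).Reachable ⟨u.1, Set.mem_diff_singleton.mpr ⟨u.2, hua⟩⟩ ⟨t, Set.mem_diff_singleton.mpr ⟨htA, hta⟩⟩ →
    ∃ w, ∃ (hwA : w ∈ A) (hwa : w ≠ a), G.Adj w a ∧
      ¬ (G.induce (A \ {a})).Reachable ⟨w, Set.mem_diff_singleton.mpr ⟨hwA, hwa⟩⟩ ⟨t, Set.mem_diff_singleton.mpr ⟨htA, hta⟩⟩ := by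
  suffices H : ∀ (u w : A) (p : (G.induce A).Walk u w), (w : V) = t → ∀ (hua : (u : V) ≠ a),
      ¬ (G.induce (A \ {a})).Reachable ⟨u.1, Set.mem_diff_singleton.mpr ⟨u.2, hua⟩⟩ ⟨t, Set.mem_diff_singleton.mpr ⟨htA, hta⟩⟩ →
      ∃ w', ∃ (hwA : w' ∈ A) (hwa : w' ≠ a), G.Adj w' a ∧
        ¬ (G.induce (A \ {a})).Reachable ⟨w', Set.mem_diff_singleton.mpr ⟨hwA, hwa⟩⟩ ⟨t, Set.mem_diff_singleton.mpr ⟨htA, hta⟩⟩ by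
    intro u p hua hnr
    exact H u ⟨t, htA⟩ p rfl hua hnr
  intro u w p
  induction p with
  | nil =>
    rename_i u'
    intro hwt hua hnr
    exact (hnr (by rw [show (⟨u'.1, Set.mem_diff_singleton.mpr ⟨u'.2, hua⟩⟩ : (A \ {a} : Set V))
      = ⟨t, Set.mem_diff_singleton.mpr ⟨htA, hta⟩⟩ from Subtype.ext hwt])).elim
  | @cons x y z h p ih =>
    intro hwt hua hnr
    by_cases hya : (y : V) = a
    · refine ⟨x.1, x.2, hua, ?_, hnr⟩
      have hG : G.Adj x.1 y.1 := h
      rwa [hya] at hG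
    · by_cases hr : (G.induce (A \ {a})).Reachable ⟨y.1, Set.mem_diff_singleton.mpr ⟨y.2, hya⟩⟩ ⟨t, Set.mem_diff_singleton.mpr ⟨htA, hta⟩⟩
      · exfalso
        apply hnr
        have hadj : (G.induce (A \ {a})).Adj ⟨x.1, Set.mem_diff_singleton.mpr ⟨x.2, hua⟩⟩ ⟨y.1, Set.mem_diff_singleton.mpr ⟨y.2, hya⟩⟩ := h
        exact hadj.reachable.trans hr
      · exact ih hwt hya hr

lemma exists_w {A : Set V} (hA : (G.induce A).Connected) {a t : V}
    (htA : t ∈ A) (hta : t ≠ a) (hcut : ¬ (G.induce (A \ {a})).Connected) :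
    ∃ w, ∃ (hwA : w ∈ A) (hwa : w ≠ a), G.Adj w a ∧
      ¬ (G.induce (A \ {a})).Reachable ⟨w, Set.mem_diff_singleton.mpr ⟨hwA, hwa⟩⟩
        ⟨t, Set.mem_diff_singleton.mpr ⟨htA, hta⟩⟩ := by
  set T : (A \ {a} : Set V) := ⟨t, Set.mem_diff_singleton.mpr ⟨htA, hta⟩⟩ with hT
  have hne : Nonempty (A \ {a} : Set V) := ⟨T⟩
  have hnp : ¬ (G.induce (A \ {a})).Preconnected := by
    intro hp; exact hcut (by haveI := hne; exact ⟨hp⟩)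
  have hx0 : ∃ x0 : (A \ {a} : Set V), ¬ (G.induce (A \ {a})).Reachable x0 T := by
    by_contra hall
    push_neg at hall
    exact hnp (fun x y => (hall x).trans (hall y).symm)
  obtain ⟨x0, hx0⟩ := hx0
  have hx0a : (x0 : V) ≠ a := fun h => x0.2.2 h
  obtain ⟨p⟩ : (G.induce A).Reachable ⟨x0.1, x0.2.1⟩ ⟨t, htA⟩ := hA.preconnected _ _
  exact exists_cross G htA hta ⟨x0.1, x0.2.1⟩ p hx0a hx0

variable [DecidableEq V] [DecidableRel G.Adj]

def mcount (D : Finset V) : ℕ := ∑ a ∈ D, (D.filter (fun b => G.Adj a b)).card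

lemma mcount_insert {D : Finset V} {x : V} (hx : x ∉ D) :
    mcount G (insert x D) = mcount G D + 2 * (D.filter (fun b => G.Adj x b)).card := by
  unfold mcount
  rw [Finset.sum_insert hx]
  have h1 : (insert x D).filter (fun b => G.Adj x b) = D.filter (fun b => G.Adj x b) := by
    rw [Finset.filter_insert, if_neg (G.irrefl)]
  rw [h1]
  have h2 : ∀ a ∈ D, ((insert x D).filter (fun b => G.Adj a b)).card
      = (D.filter (fun b => G.Adj a b)).card + (if G.Adj a x then 1 else 0) := by
    intro a ha
    rw [Finset.filter_insert]
    by_cases h : G.Adj a x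
    · rw [if_pos h, Finset.card_insert_of_notMem (fun hc => hx (Finset.mem_of_mem_filter _ hc)),
        if_pos h]
    · rw [if_neg h, if_neg h]; ring
  rw [Finset.sum_congr rfl h2, Finset.sum_add_distrib]
  have h3 : (∑ a ∈ D, if G.Adj a x then 1 else 0) = (D.filter (fun b => G.Adj x b)).card := by
    rw [Finset.card_filter]
    exact Finset.sum_congr rfl (fun a _ => by simp only [G.adj_comm])
  rw [h3]; ring

lemma mcount_erase_add {D : Finset V} {x : V} (hx : x ∈ D) :
    mcount G D = mcount G (D.erase x) + 2 * ((D.erase x).filter (fun b => G.Adj x b)).card := by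
  have := mcount_insert G (D := D.erase x) (x := x) (Finset.notMem_erase x D)
  rwa [Finset.insert_erase hx] at this

set_option linter.unusedSectionVars false in
lemma filter_adj_card_one {A : Finset V} {s d : V} (hd : d ∈ A) (hadj : G.Adj s d)
    (huniq : ∀ y ∈ A, G.Adj s y → y = d) :
    (A.filter (fun b => G.Adj s b)).card = 1 := by
  rw [Finset.card_eq_one]
  exact ⟨d, by
    ext y
    simp only [Finset.mem_filter, Finset.mem_singleton]
    exact ⟨fun ⟨hy, hadjy⟩ => huniq y hy hadjy, fun h => h ▸ ⟨hd, hadj⟩⟩⟩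

end helpers

theorem stmt_5 {V : Type*} [Fintype V] (G : SimpleGraph V) (hconn : G.Connected)
    (hfree : IndFree G graphQ2) :
    ∃ D : Set V, IsDomSet G D ∧ (G.induce D).Connected ∧
      IndFree (G.induce D) (cycleGraph 4) := by
  classical
  -- the measure
  set μ : Finset V → ℤ := fun A => (mcount G A : ℤ) - 2 * A.card with hμ
  set P : Finset V → Prop := fun A => IsDomSet G (↑A : Set V) ∧ (G.induce (↑A : Set V)).Connected
    with hP
  have hPuniv : P Finset.univ := by
    constructor
    · intro v hv; exact absurd (by simp : v ∈ (↑(Finset.univ : Finset V) : Set V)) hv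
    · rw [Finset.coe_univ]; exact connected_induce_univ G hconn
  obtain ⟨D, hDmem, hDmin⟩ := Finset.exists_min_image
    (Finset.univ.powerset.filter P) μ
    ⟨Finset.univ, Finset.mem_filter.mpr ⟨Finset.mem_powerset.mpr (Finset.Subset.refl _), hPuniv⟩⟩
  have hDgood : P D := (Finset.mem_filter.mp hDmem).2
  obtain ⟨hdom, hcon⟩ := hDgood
  have hmin : ∀ A : Finset V, P A → μ D ≤ μ A := by
    intro A hA
    exact hDmin A (Finset.mem_filter.mpr ⟨Finset.mem_powerset.mpr (Finset.subset_univ A), hA⟩)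
  refine ⟨(↑D : Set V), hdom, hcon, ?_⟩
  by_contra hC4
  rw [IndFree, not_isEmpty_iff] at hC4
  obtain ⟨φ⟩ := hC4

  -- extract the C4
  have hvmem : ∀ i : Fin 4, (φ i).1 ∈ D := fun i => Finset.mem_coe.mp (φ i).2
  have hadjX : ∀ i j : Fin 4, (cycleGraph 4).Adj i j → G.Adj (φ i).1 (φ j).1 :=
    fun i j h => φ.map_rel_iff.mpr h
  have hnadjX : ∀ i j : Fin 4, ¬(cycleGraph 4).Adj i j → ¬ G.Adj (φ i).1 (φ j).1 :=
    fun i j hn h => hn (φ.map_rel_iff.mp h)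
  have hneX : ∀ i j : Fin 4, i ≠ j → (φ i).1 ≠ (φ j).1 :=
    fun i j hij h => hij (φ.injective (Subtype.ext h))
  set Cyc : V → V → V → V → Prop := fun a b c d =>
    a ∈ D ∧ b ∈ D ∧ c ∈ D ∧ d ∈ D ∧ G.Adj a b ∧ G.Adj b c ∧ G.Adj c d ∧ G.Adj d a ∧
    ¬G.Adj a c ∧ ¬G.Adj b d ∧ a ≠ c ∧ b ≠ d with hCycdef
  have hcyc0 : Cyc (φ 0).1 (φ 1).1 (φ 2).1 (φ 3).1 :=
    ⟨hvmem 0, hvmem 1, hvmem 2, hvmem 3,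
     hadjX 0 1 (by decide), hadjX 1 2 (by decide), hadjX 2 3 (by decide), hadjX 3 0 (by decide),
     hnadjX 0 2 (by decide), hnadjX 1 3 (by decide), hneX 0 2 (by decide), hneX 1 3 (by decide)⟩
  have hrot : ∀ a b c d, Cyc a b c d → Cyc b c d a := by
    rintro a b c d ⟨ha,hb,hc,hd,h1,h2,h3,h4,n1,n2,e1,e2⟩
    exact ⟨hb,hc,hd,ha,h2,h3,h4,h1,n2, fun h => n1 h.symm, e2, fun h => e1 h.symm⟩
  have hrefl : ∀ a b c d, Cyc a b c d → Cyc a d c b := by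
    rintro a b c d ⟨ha,hb,hc,hd,h1,h2,h3,h4,n1,n2,e1,e2⟩
    exact ⟨ha,hd,hc,hb, h4.symm, h3.symm, h2.symm, h1.symm, n1, fun h => n2 h.symm,
      e1, fun h => e2 h.symm⟩
  -- privates
  set Pp : V → V → Prop := fun a z => z ∉ D ∧ G.Adj z a ∧ ∀ y ∈ D, G.Adj z y → y = a
    with hPpdef
  -- reachability in the punctured induced graph
  set RR : V → V → V → Prop := fun a y t =>
    ∃ (hy : y ∈ (↑D : Set V) \ {a}) (ht : t ∈ (↑D : Set V) \ {a}),
      (G.induce ((↑D : Set V) \ {a})).Reachable ⟨y, hy⟩ ⟨t, ht⟩ with hRRdef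
  have hRRstep : ∀ a t y w, w ∈ D → w ≠ a → G.Adj w y → RR a y t → RR a w t := by
    rintro a t y w hwD hwa hadj ⟨hy, ht, hr⟩
    refine ⟨Set.mem_diff_singleton.mpr ⟨Finset.mem_coe.mpr hwD, hwa⟩, ht, ?_⟩
    have hadj' : (G.induce ((↑D : Set V) \ {a})).Adj
        ⟨w, Set.mem_diff_singleton.mpr ⟨Finset.mem_coe.mpr hwD, hwa⟩⟩ ⟨y, hy⟩ := hadj
    exact hadj'.reachable.trans hr
  have hRRrefl : ∀ a t, t ∈ D → t ≠ a → RR a t t := by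
    intro a t ht hta
    exact ⟨Set.mem_diff_singleton.mpr ⟨Finset.mem_coe.mpr ht, hta⟩,
      Set.mem_diff_singleton.mpr ⟨Finset.mem_coe.mpr ht, hta⟩, Reachable.refl _⟩
  -- improvement principle
  have himpr : ∀ A : Finset V, IsDomSet G (↑A : Set V) → (G.induce (↑A : Set V)).Connected →
      μ A < μ D → False :=
    fun A h1 h2 hlt => absurd (hmin A ⟨h1, h2⟩) (not_le.mpr hlt)
  have hdeg2 : ∀ a b d', a ∈ D → b ∈ D → d' ∈ D → b ≠ d' → G.Adj a b → G.Adj a d' →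
      2 ≤ ((D.erase a).filter (fun y => G.Adj a y)).card := by
    intro a b d' haD hbD hdD hbd hab had
    have hsub : ({b, d'} : Finset V) ⊆ (D.erase a).filter (fun y => G.Adj a y) := by
      intro x hx
      rcases Finset.mem_insert.mp hx with rfl | hx
      · exact Finset.mem_filter.mpr ⟨Finset.mem_erase.mpr ⟨hab.ne', hbD⟩, hab⟩
      · rw [Finset.mem_singleton.mp hx]
        exact Finset.mem_filter.mpr ⟨Finset.mem_erase.mpr ⟨had.ne', hdD⟩, had⟩
    calc 2 = ({b, d'} : Finset V).card := (Finset.card_pair hbd).symm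
    _ ≤ _ := Finset.card_le_card hsub
  have hmu_del : ∀ a, a ∈ D → 2 ≤ ((D.erase a).filter (fun y => G.Adj a y)).card →
      μ (D.erase a) ≤ μ D - 2 := by
    intro a haD hdeg
    have hm := mcount_erase_add G haD
    have hc : (D.erase a).card + 1 = D.card := Finset.card_erase_add_one haD
    have hmz : (mcount G D : ℤ)
        = mcount G (D.erase a) + 2 * ((D.erase a).filter (fun y => G.Adj a y)).card := by
      exact_mod_cast hm
    have hcz : ((D.erase a).card : ℤ) + 1 = D.card := by exact_mod_cast hc
    have hdz : (2 : ℤ) ≤ ((D.erase a).filter (fun y => G.Adj a y)).card := by exact_mod_cast hdeg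
    simp only [hμ]
    linarith
  have hmu_ins : ∀ (A : Finset V) (s : V), s ∉ A → (A.filter (fun y => G.Adj s y)).card = 1 →
      μ (insert s A) = μ A := by
    intro A s hs h1
    have hm := mcount_insert G (D := A) (x := s) hs
    have hc := Finset.card_insert_of_notMem hs
    simp only [hμ]
    rw [hm, h1, hc]
    push_cast
    ring
  -- membership helpers
  have hbneA : ∀ a b, G.Adj a b → b ∈ D → b ∈ D.erase a :=
    fun a b hab hbD => Finset.mem_erase.mpr ⟨hab.ne', hbD⟩
  -- classify outside vertices
  have hclassify : ∀ a, a ∈ D → ∀ u, u ∉ D → (∃ y ∈ D.erase a, G.Adj u y) ∨ Pp a u := by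
    intro a haD u huD
    by_cases hex : ∃ y ∈ D, y ≠ a ∧ G.Adj u y
    · obtain ⟨y, hyD, hya, hadj⟩ := hex
      exact Or.inl ⟨y, Finset.mem_erase.mpr ⟨hya, hyD⟩, hadj⟩
    · push_neg at hex
      obtain ⟨dd, hddD, hadj⟩ := hdom u (fun h => huD (Finset.mem_coe.mp h))
      have hddD' : dd ∈ D := Finset.mem_coe.mp hddD
      have hdda : dd = a := by
        by_contra h
        exact hex dd hddD' h hadj
      refine Or.inr ⟨huD, hdda ▸ hadj, ?_⟩
      intro y hy hadjy
      by_contra hne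
      exact hex y hy hne hadjy
  -- step A: a non-cut position has a private vertex
  have hstepA : ∀ a b c d, Cyc a b c d → (G.induce ((↑D : Set V) \ {a})).Connected →
      ∃ z, Pp a z := by
    rintro a b c d ⟨haD,hbD,hcD,hdD,h1,h2,h3,h4,n1,n2,e1,e2⟩ hconn'
    by_contra hno
    push_neg at hno
    have hdom' : IsDomSet G (↑(D.erase a) : Set V) := by
      intro u hu
      have huA : u ∉ D.erase a := fun h => hu (Finset.mem_coe.mpr h)
      by_cases huD : u ∈ D
      · have hua : u = a := by
          by_contra h
          exact huA (Finset.mem_erase.mpr ⟨h, huD⟩)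
        exact ⟨b, Finset.mem_coe.mpr (hbneA a b h1 hbD), hua ▸ h1⟩
      · rcases hclassify a haD u huD with ⟨y, hyA, hadj⟩ | hPa
        · exact ⟨y, Finset.mem_coe.mpr hyA, hadj⟩
        · exact absurd hPa (hno u)
    have hcon' : (G.induce (↑(D.erase a) : Set V)).Connected := by
      rw [Finset.coe_erase]; exact hconn'
    have hdel := hmu_del a haD (hdeg2 a b d haD hbD hdD e2 h1 h4.symm)
    exact himpr (D.erase a) hdom' hcon' (by linarith)

  have hcover1 : ∀ a b c d, Cyc a b c d → (G.induce ((↑D : Set V) \ {a})).Connected →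
      ∀ s vs, Pp vs s → vs ∈ D → vs ≠ a → (∀ z, Pp a z → G.Adj z s) → False := by
    rintro a b c d ⟨haD,hbD,hcD,hdD,h1,h2,h3,h4,n1,n2,e1,e2⟩ hconn' s vs hPs hvsD hvsa hcov
    obtain ⟨hsD, hsadj, hsuniq⟩ := hPs
    have hsA : s ∉ D.erase a := fun h => hsD (Finset.mem_of_mem_erase h)
    have hvsA : vs ∈ D.erase a := Finset.mem_erase.mpr ⟨hvsa, hvsD⟩
    have hf1 : ((D.erase a).filter (fun y => G.Adj s y)).card = 1 :=
      filter_adj_card_one G hvsA hsadj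
        (fun y hy hadj => hsuniq y (Finset.mem_of_mem_erase hy) hadj)
    have hdom' : IsDomSet G (↑(insert s (D.erase a)) : Set V) := by
      intro u hu
      have huD' : u ∉ insert s (D.erase a) := fun h => hu (Finset.mem_coe.mpr h)
      by_cases huD : u ∈ D
      · have hua : u = a := by
          by_contra h
          exact huD' (Finset.mem_insert_of_mem (Finset.mem_erase.mpr ⟨h, huD⟩))
        exact ⟨b, Finset.mem_coe.mpr (Finset.mem_insert_of_mem (hbneA a b h1 hbD)),
          by rw [hua]; exact h1⟩
      · rcases hclassify a haD u huD with ⟨y, hyA, hadj⟩ | hPa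
        · exact ⟨y, Finset.mem_coe.mpr (Finset.mem_insert_of_mem hyA), hadj⟩
        · exact ⟨s, Finset.mem_coe.mpr (Finset.mem_insert_self s _), hcov u hPa⟩
    have hconn'' : (G.induce (↑(insert s (D.erase a)) : Set V)).Connected := by
      have hEq : (↑(insert s (D.erase a)) : Set V) = insert s ((↑D : Set V) \ {a}) := by
        rw [Finset.coe_insert, Finset.coe_erase]
      rw [hEq]
      exact connected_insert_pendant G hconn'
        (Set.mem_diff_singleton.mpr ⟨Finset.mem_coe.mpr hvsD, hvsa⟩) hsadj
    have hdel := hmu_del a haD (hdeg2 a b d haD hbD hdD e2 h1 h4.symm)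
    have hins := hmu_ins (D.erase a) s hsA hf1
    exact himpr _ hdom' hconn'' (by linarith)
  have hcover2 : ∀ a b c d, Cyc a b c d → (G.induce ((↑D : Set V) \ {a})).Connected →
      ∀ s vs t vt, Pp vs s → Pp vt t → vs ∈ D → vt ∈ D → vs ≠ a → vt ≠ a →
      ¬ G.Adj s t → s ≠ t → (∀ z, Pp a z → G.Adj z s ∨ G.Adj z t) → False := by
    rintro a b c d ⟨haD,hbD,hcD,hdD,h1,h2,h3,h4,n1,n2,e1,e2⟩ hconn' s vs t vt hPs hPt hvsD hvtD
      hvsa hvta hst hstne hcov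
    obtain ⟨hsD, hsadj, hsuniq⟩ := hPs
    obtain ⟨htD, htadj, htuniq⟩ := hPt
    have htA : t ∉ D.erase a := fun h => htD (Finset.mem_of_mem_erase h)
    have hvtA : vt ∈ D.erase a := Finset.mem_erase.mpr ⟨hvta, hvtD⟩
    have hf1t : ((D.erase a).filter (fun y => G.Adj t y)).card = 1 :=
      filter_adj_card_one G hvtA htadj
        (fun y hy hadj => htuniq y (Finset.mem_of_mem_erase hy) hadj)
    have hsA2 : s ∉ insert t (D.erase a) := by
      intro h
      rcases Finset.mem_insert.mp h with h' | h'
      · exact hstne h'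
      · exact hsD (Finset.mem_of_mem_erase h')
    have hvsA2 : vs ∈ insert t (D.erase a) :=
      Finset.mem_insert_of_mem (Finset.mem_erase.mpr ⟨hvsa, hvsD⟩)
    have hf1s : ((insert t (D.erase a)).filter (fun y => G.Adj s y)).card = 1 := by
      refine filter_adj_card_one G hvsA2 hsadj ?_
      intro y hy hadj
      rcases Finset.mem_insert.mp hy with rfl | hy'
      · exact absurd hadj hst
      · exact hsuniq y (Finset.mem_of_mem_erase hy') hadj
    have hdom' : IsDomSet G (↑(insert s (insert t (D.erase a))) : Set V) := by
      intro u hu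
      have huD' : u ∉ insert s (insert t (D.erase a)) := fun h => hu (Finset.mem_coe.mpr h)
      by_cases huD : u ∈ D
      · have hua : u = a := by
          by_contra h
          exact huD' (Finset.mem_insert_of_mem
            (Finset.mem_insert_of_mem (Finset.mem_erase.mpr ⟨h, huD⟩)))
        exact ⟨b, Finset.mem_coe.mpr (Finset.mem_insert_of_mem
          (Finset.mem_insert_of_mem (hbneA a b h1 hbD))), by rw [hua]; exact h1⟩
      · rcases hclassify a haD u huD with ⟨y, hyA, hadj⟩ | hPa
        · exact ⟨y, Finset.mem_coe.mpr (Finset.mem_insert_of_mem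
            (Finset.mem_insert_of_mem hyA)), hadj⟩
        · rcases hcov u hPa with h' | h'
          · exact ⟨s, Finset.mem_coe.mpr (Finset.mem_insert_self s _), h'⟩
          · exact ⟨t, Finset.mem_coe.mpr
              (Finset.mem_insert_of_mem (Finset.mem_insert_self t _)), h'⟩
    have hconn'' : (G.induce (↑(insert s (insert t (D.erase a))) : Set V)).Connected := by
      have hEq : (↑(insert s (insert t (D.erase a))) : Set V)
          = insert s (insert t ((↑D : Set V) \ {a})) := by
        rw [Finset.coe_insert, Finset.coe_insert, Finset.coe_erase]
      rw [hEq]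
      have hstep1 : (G.induce (insert t ((↑D : Set V) \ {a}))).Connected :=
        connected_insert_pendant G hconn'
          (Set.mem_diff_singleton.mpr ⟨Finset.mem_coe.mpr hvtD, hvta⟩) htadj
      exact connected_insert_pendant G hstep1
        (Set.mem_insert_of_mem _ (Set.mem_diff_singleton.mpr ⟨Finset.mem_coe.mpr hvsD, hvsa⟩))
        hsadj
    have hdel := hmu_del a haD (hdeg2 a b d haD hbD hdD e2 h1 h4.symm)
    have hins1 := hmu_ins (D.erase a) t htA hf1t
    have hins2 := hmu_ins (insert t (D.erase a)) s hsA2 hf1s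
    exact himpr _ hdom' hconn'' (by linarith)
  have hcover3 : ∀ a b c d, Cyc a b c d → (G.induce ((↑D : Set V) \ {a})).Connected →
      ∀ s vs t vt r vr, Pp vs s → Pp vt t → Pp vr r → vs ∈ D → vt ∈ D → vr ∈ D →
      vs ≠ a → vt ≠ a → vr ≠ a →
      ¬ G.Adj s t → ¬ G.Adj s r → ¬ G.Adj t r → s ≠ t → s ≠ r → t ≠ r →
      (∀ z, Pp a z → G.Adj z s ∨ G.Adj z t ∨ G.Adj z r) → False := by
    rintro a b c d ⟨haD,hbD,hcD,hdD,h1,h2,h3,h4,n1,n2,e1,e2⟩ hconn' s vs t vt r vr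
      hPs hPt hPr hvsD hvtD hvrD hvsa hvta hvra hst hsr htr hstne hsrne htrne hcov
    obtain ⟨hsD, hsadj, hsuniq⟩ := hPs
    obtain ⟨htD, htadj, htuniq⟩ := hPt
    obtain ⟨hrD, hradj, hruniq⟩ := hPr
    have hrA : r ∉ D.erase a := fun h => hrD (Finset.mem_of_mem_erase h)
    have hvrA : vr ∈ D.erase a := Finset.mem_erase.mpr ⟨hvra, hvrD⟩
    have hf1r : ((D.erase a).filter (fun y => G.Adj r y)).card = 1 :=
      filter_adj_card_one G hvrA hradj
        (fun y hy hadj => hruniq y (Finset.mem_of_mem_erase hy) hadj)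
    have htA2 : t ∉ insert r (D.erase a) := by
      intro h
      rcases Finset.mem_insert.mp h with h' | h'
      · exact htrne h'
      · exact htD (Finset.mem_of_mem_erase h')
    have hvtA2 : vt ∈ insert r (D.erase a) :=
      Finset.mem_insert_of_mem (Finset.mem_erase.mpr ⟨hvta, hvtD⟩)
    have hf1t : ((insert r (D.erase a)).filter (fun y => G.Adj t y)).card = 1 := by
      refine filter_adj_card_one G hvtA2 htadj ?_
      intro y hy hadj
      rcases Finset.mem_insert.mp hy with rfl | hy'
      · exact absurd hadj htr
      · exact htuniq y (Finset.mem_of_mem_erase hy') hadj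
    have hsA3 : s ∉ insert t (insert r (D.erase a)) := by
      intro h
      rcases Finset.mem_insert.mp h with h' | h'
      · exact hstne h'
      · rcases Finset.mem_insert.mp h' with h'' | h''
        · exact hsrne h''
        · exact hsD (Finset.mem_of_mem_erase h'')
    have hvsA3 : vs ∈ insert t (insert r (D.erase a)) :=
      Finset.mem_insert_of_mem
        (Finset.mem_insert_of_mem (Finset.mem_erase.mpr ⟨hvsa, hvsD⟩))
    have hf1s : ((insert t (insert r (D.erase a))).filter (fun y => G.Adj s y)).card = 1 := by
      refine filter_adj_card_one G hvsA3 hsadj ?_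
      intro y hy hadj
      rcases Finset.mem_insert.mp hy with rfl | hy'
      · exact absurd hadj hst
      · rcases Finset.mem_insert.mp hy' with rfl | hy''
        · exact absurd hadj hsr
        · exact hsuniq y (Finset.mem_of_mem_erase hy'') hadj
    have hdom' : IsDomSet G (↑(insert s (insert t (insert r (D.erase a)))) : Set V) := by
      intro u hu
      have huD' : u ∉ insert s (insert t (insert r (D.erase a))) :=
        fun h => hu (Finset.mem_coe.mpr h)
      by_cases huD : u ∈ D
      · have hua : u = a := by
          by_contra h
          exact huD' (Finset.mem_insert_of_mem (Finset.mem_insert_of_mem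
            (Finset.mem_insert_of_mem (Finset.mem_erase.mpr ⟨h, huD⟩))))
        exact ⟨b, Finset.mem_coe.mpr (Finset.mem_insert_of_mem (Finset.mem_insert_of_mem
          (Finset.mem_insert_of_mem (hbneA a b h1 hbD)))), by rw [hua]; exact h1⟩
      · rcases hclassify a haD u huD with ⟨y, hyA, hadj⟩ | hPa
        · exact ⟨y, Finset.mem_coe.mpr (Finset.mem_insert_of_mem (Finset.mem_insert_of_mem
            (Finset.mem_insert_of_mem hyA))), hadj⟩
        · rcases hcov u hPa with h' | h' | h'
          · exact ⟨s, Finset.mem_coe.mpr (Finset.mem_insert_self s _), h'⟩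
          · exact ⟨t, Finset.mem_coe.mpr (Finset.mem_insert_of_mem
              (Finset.mem_insert_self t _)), h'⟩
          · exact ⟨r, Finset.mem_coe.mpr (Finset.mem_insert_of_mem (Finset.mem_insert_of_mem
              (Finset.mem_insert_self r _))), h'⟩
    have hconn'' : (G.induce (↑(insert s (insert t (insert r (D.erase a)))) : Set V)).Connected := by
      have hEq : (↑(insert s (insert t (insert r (D.erase a)))) : Set V)
          = insert s (insert t (insert r ((↑D : Set V) \ {a}))) := by
        rw [Finset.coe_insert, Finset.coe_insert, Finset.coe_insert, Finset.coe_erase]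
      rw [hEq]
      have hstep1 : (G.induce (insert r ((↑D : Set V) \ {a}))).Connected :=
        connected_insert_pendant G hconn'
          (Set.mem_diff_singleton.mpr ⟨Finset.mem_coe.mpr hvrD, hvra⟩) hradj
      have hstep2 : (G.induce (insert t (insert r ((↑D : Set V) \ {a})))).Connected :=
        connected_insert_pendant G hstep1
          (Set.mem_insert_of_mem _
            (Set.mem_diff_singleton.mpr ⟨Finset.mem_coe.mpr hvtD, hvta⟩)) htadj
      exact connected_insert_pendant G hstep2
        (Set.mem_insert_of_mem _ (Set.mem_insert_of_mem _
          (Set.mem_diff_singleton.mpr ⟨Finset.mem_coe.mpr hvsD, hvsa⟩))) hsadj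
    have hdel := hmu_del a haD (hdeg2 a b d haD hbD hdD e2 h1 h4.symm)
    have hins1 := hmu_ins (D.erase a) r hrA hf1r
    have hins2 := hmu_ins (insert r (D.erase a)) t htA2 hf1t
    have hins3 := hmu_ins (insert t (insert r (D.erase a))) s hsA3 hf1s
    exact himpr _ hdom' hconn'' (by linarith)
  -- pendant from a cut position
  have hw : ∀ a b c d, Cyc a b c d → ¬(G.induce ((↑D : Set V) \ {a})).Connected →
      ∃ w, w ∈ D ∧ G.Adj w a ∧ ¬ RR a w b := by
    rintro a b c d ⟨haD,hbD,hcD,hdD,h1,h2,h3,h4,n1,n2,e1,e2⟩ hcut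
    obtain ⟨w, hwA, hwa, hadj, hnr⟩ :=
      exists_w G hcon (a := a) (t := b) (Finset.mem_coe.mpr hbD) h1.ne' hcut
    refine ⟨w, Finset.mem_coe.mp hwA, hadj, ?_⟩
    rintro ⟨hy, ht, hr⟩
    exact hnr hr
  have hWfacts : ∀ a b c d w, Cyc a b c d → w ∈ D → G.Adj w a → ¬ RR a w b →
      ¬G.Adj w b ∧ ¬G.Adj w c ∧ ¬G.Adj w d ∧ w ≠ b ∧ w ≠ c ∧ w ≠ d := by
    rintro a b c d w ⟨haD,hbD,hcD,hdD,h1,h2,h3,h4,n1,n2,e1,e2⟩ hwD hwa hnr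
    have hRb : RR a b b := hRRrefl a b hbD h1.ne'
    have hRc : RR a c b := hRRstep a b b c hcD (fun h => e1 h.symm) h2.symm hRb
    have hRd : RR a d b := hRRstep a b c d hdD h4.ne h3.symm hRc
    exact ⟨fun h => hnr (hRRstep a b b w hwD hwa.ne h hRb),
           fun h => hnr (hRRstep a b c w hwD hwa.ne h hRc),
           fun h => hnr (hRRstep a b d w hwD hwa.ne h hRd),
           fun h => hnr (by rw [h]; exact hRb),
           fun h => hnr (by rw [h]; exact hRc),
           fun h => hnr (by rw [h]; exact hRd)⟩
  have hWW : ∀ a b w w', ¬ RR a w b → w' ∈ D → w' ≠ a → RR a w' b → w ∈ D → w ≠ a →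
      ¬G.Adj w w' ∧ w ≠ w' := by
    intro a b w w' hnr hw'D hw'a hR hwD hwa
    exact ⟨fun h => hnr (hRRstep a b w' w hwD hwa h hR),
           fun h => hnr (by rw [h]; exact hR)⟩
  have hWP : ∀ x w z, Pp x z → w ∈ D → w ≠ x → ¬ G.Adj w z ∧ w ≠ z := by
    rintro x w z ⟨hzD, hzadj, hzuniq⟩ hwD hwx
    exact ⟨fun h => hwx (hzuniq w hwD h.symm), fun h => hzD (by rw [← h]; exact hwD)⟩
  have hPnadjv : ∀ x z y, Pp x z → y ∈ D → y ≠ x → ¬ G.Adj z y :=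
    fun x z y hz hyD hyx h => hyx (hz.2.2 y hyD h)
  have hPneD : ∀ z y, z ∉ D → y ∈ D → z ≠ y := fun z y hz hy h => hz (by rw [h]; exact hy)
  have hPP : ∀ x x' z z', x ∈ D → Pp x z → Pp x' z' → x ≠ x' → z ≠ z' := by
    rintro x x' z z' hxD hz hz' hxx' h
    exact hxx' (hz'.2.2 x hxD (by rw [← h]; exact hz.2.1))
  have hLP : ∀ a b c d z, Cyc a b c d → Pp a z →
      G.Adj a z ∧ ¬G.Adj z b ∧ ¬G.Adj z c ∧ ¬G.Adj z d ∧ z ≠ b ∧ z ≠ c ∧ z ≠ d := by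
    rintro a b c d z ⟨haD,hbD,hcD,hdD,h1,h2,h3,h4,n1,n2,e1,e2⟩ hz
    exact ⟨hz.2.1.symm, hPnadjv a z b hz hbD h1.ne', hPnadjv a z c hz hcD (fun h => e1 h.symm),
      hPnadjv a z d hz hdD h4.ne, hPneD z b hz.1 hbD, hPneD z c hz.1 hcD, hPneD z d hz.1 hdD⟩

  -- pattern: all four positions are cut vertices
  have patAllCut : ∀ a b c d, Cyc a b c d →
      ¬(G.induce ((↑D : Set V) \ {a})).Connected →
      ¬(G.induce ((↑D : Set V) \ {b})).Connected →
      ¬(G.induce ((↑D : Set V) \ {c})).Connected →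
      ¬(G.induce ((↑D : Set V) \ {d})).Connected → False := by
    intro a b c d hcyc ka kb kc kd
    obtain ⟨haD,hbD,hcD,hdD,h1,h2,h3,h4,n1,n2,e1,e2⟩ := id hcyc
    have hcycB := hrot _ _ _ _ hcyc
    have hcycC := hrot _ _ _ _ hcycB
    have hcycD := hrot _ _ _ _ hcycC
    obtain ⟨wa, hwaD, hwaA, hwaR⟩ := hw a b c d hcyc ka
    obtain ⟨wb, hwbD, hwbA, hwbR⟩ := hw b c d a hcycB kb
    obtain ⟨wc, hwcD, hwcA, hwcR⟩ := hw c d a b hcycC kc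
    obtain ⟨wd, hwdD, hwdA, hwdR⟩ := hw d a b c hcycD kd
    obtain ⟨WAb, WAc, WAd, WAnb, WAnc, WAnd⟩ := hWfacts a b c d wa hcyc hwaD hwaA hwaR
    obtain ⟨WBc, WBd, WBa, WBnc, WBnd, WBna⟩ := hWfacts b c d a wb hcycB hwbD hwbA hwbR
    obtain ⟨WCd, WCa, WCb, WCnd, WCna, WCnb⟩ := hWfacts c d a b wc hcycC hwcD hwcA hwcR
    obtain ⟨WDa, WDb, WDc, WDna, WDnb, WDnc⟩ := hWfacts d a b c wd hcycD hwdD hwdA hwdR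
    have hRb : RR a b b := hRRrefl a b hbD h1.ne'
    have hRc : RR a c b := hRRstep a b b c hcD (fun h => e1 h.symm) h2.symm hRb
    have hRd : RR a d b := hRRstep a b c d hdD h4.ne h3.symm hRc
    have hRb2 : RR b c c := hRRrefl b c hcD h2.ne'
    have hRd2 : RR b d c := hRRstep b c c d hdD (fun h => e2 h.symm) h3.symm hRb2
    have hRc3 : RR c d d := hRRrefl c d hdD h3.ne'
    have Mab := hWW a b wa wb hwaR hwbD WBna (hRRstep a b b wb hwbD WBna hwbA hRb) hwaD hwaA.ne
    have Mac := hWW a b wa wc hwaR hwcD WCna (hRRstep a b c wc hwcD WCna hwcA hRc) hwaD hwaA.ne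
    have Mad := hWW a b wa wd hwaR hwdD WDna (hRRstep a b d wd hwdD WDna hwdA hRd) hwaD hwaA.ne
    have Mbc := hWW b c wb wc hwbR hwcD WCnb (hRRstep b c c wc hwcD WCnb hwcA hRb2) hwbD hwbA.ne
    have Mbd := hWW b c wb wd hwbR hwdD WDnb (hRRstep b c d wd hwdD WDnb hwdA hRd2) hwbD hwbA.ne
    have Mcd := hWW c d wc wd hwcR hwdD WDnc (hRRstep c d d wd hwdD WDnc hwdA hRc3) hwcD hwcA.ne
    exact buildQ2 G hfree a b c d wa wb wc wd h1 h2 h3 h4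
      hwaA.symm hwbA.symm hwcA.symm hwdA.symm n1 n2
      WAb WAc WAd WBa WBc WBd WCa WCb WCd WDa WDb WDc
      Mab.1 Mac.1 Mad.1 Mbc.1 Mbd.1 Mcd.1
      e1 e2
      WAnb WAnc WAnd WBna WBnc WBnd WCna WCnb WCnd WDna WDnb WDnc
      Mab.2 Mac.2 Mad.2 Mbc.2 Mbd.2 Mcd.2
  -- pattern: exactly one free position (role a)
  have patOneFree : ∀ a b c d, Cyc a b c d →
      (G.induce ((↑D : Set V) \ {a})).Connected →
      ¬(G.induce ((↑D : Set V) \ {b})).Connected →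
      ¬(G.induce ((↑D : Set V) \ {c})).Connected →
      ¬(G.induce ((↑D : Set V) \ {d})).Connected → False := by
    intro a b c d hcyc fa kb kc kd
    obtain ⟨haD,hbD,hcD,hdD,h1,h2,h3,h4,n1,n2,e1,e2⟩ := id hcyc
    have hcycB := hrot _ _ _ _ hcyc
    have hcycC := hrot _ _ _ _ hcycB
    have hcycD := hrot _ _ _ _ hcycC
    obtain ⟨za, hPza⟩ := hstepA a b c d hcyc fa
    obtain ⟨LAa, LAb, LAc, LAd, LAnb, LAnc, LAnd⟩ := hLP a b c d za hcyc hPza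
    obtain ⟨wb, hwbD, hwbA, hwbR⟩ := hw b c d a hcycB kb
    obtain ⟨wc, hwcD, hwcA, hwcR⟩ := hw c d a b hcycC kc
    obtain ⟨wd, hwdD, hwdA, hwdR⟩ := hw d a b c hcycD kd
    obtain ⟨WBc, WBd, WBa, WBnc, WBnd, WBna⟩ := hWfacts b c d a wb hcycB hwbD hwbA hwbR
    obtain ⟨WCd, WCa, WCb, WCnd, WCna, WCnb⟩ := hWfacts c d a b wc hcycC hwcD hwcA hwcR
    obtain ⟨WDa, WDb, WDc, WDna, WDnb, WDnc⟩ := hWfacts d a b c wd hcycD hwdD hwdA hwdR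
    have hRb2 : RR b c c := hRRrefl b c hcD h2.ne'
    have hRd2 : RR b d c := hRRstep b c c d hdD (fun h => e2 h.symm) h3.symm hRb2
    have hRc3 : RR c d d := hRRrefl c d hdD h3.ne'
    have Mab := hWP a wb za hPza hwbD WBna
    have Mac := hWP a wc za hPza hwcD WCna
    have Mad := hWP a wd za hPza hwdD WDna
    have Mbc := hWW b c wb wc hwbR hwcD WCnb (hRRstep b c c wc hwcD WCnb hwcA hRb2) hwbD hwbA.ne
    have Mbd := hWW b c wb wd hwbR hwdD WDnb (hRRstep b c d wd hwdD WDnb hwdA hRd2) hwbD hwbA.ne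
    have Mcd := hWW c d wc wd hwcR hwdD WDnc (hRRstep c d d wd hwdD WDnc hwdA hRc3) hwcD hwcA.ne
    exact buildQ2 G hfree a b c d za wb wc wd h1 h2 h3 h4
      LAa hwbA.symm hwcA.symm hwdA.symm n1 n2
      LAb LAc LAd WBa WBc WBd WCa WCb WCd WDa WDb WDc
      (fun h => Mab.1 h.symm) (fun h => Mac.1 h.symm) (fun h => Mad.1 h.symm)
      Mbc.1 Mbd.1 Mcd.1
      e1 e2
      LAnb LAnc LAnd WBna WBnc WBnd WCna WCnb WCnd WDna WDnb WDnc
      Mab.2.symm Mac.2.symm Mad.2.symm Mbc.2 Mbd.2 Mcd.2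

  -- pattern: two adjacent free positions (roles a, b)
  have patTwoAdj : ∀ a b c d, Cyc a b c d →
      (G.induce ((↑D : Set V) \ {a})).Connected →
      (G.induce ((↑D : Set V) \ {b})).Connected →
      ¬(G.induce ((↑D : Set V) \ {c})).Connected →
      ¬(G.induce ((↑D : Set V) \ {d})).Connected → False := by
    intro a b c d hcyc fa fb kc kd
    obtain ⟨haD,hbD,hcD,hdD,h1,h2,h3,h4,n1,n2,e1,e2⟩ := id hcyc
    have hcycB := hrot _ _ _ _ hcyc
    have hcycC := hrot _ _ _ _ hcycB
    have hcycD := hrot _ _ _ _ hcycC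
    obtain ⟨zb, hPzb⟩ := hstepA b c d a hcycB fb
    by_cases hall : ∀ z, Pp a z → G.Adj z zb
    · exact hcover1 a b c d hcyc fa zb b hPzb hbD h1.ne' hall
    · push_neg at hall
      obtain ⟨za, hPza, hzazb⟩ := hall
      obtain ⟨LAa, LAb, LAc, LAd, LAnb, LAnc, LAnd⟩ := hLP a b c d za hcyc hPza
      obtain ⟨LBb, LBc, LBd, LBa, LBnc, LBnd, LBna⟩ := hLP b c d a zb hcycB hPzb
      obtain ⟨wc, hwcD, hwcA, hwcR⟩ := hw c d a b hcycC kc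
      obtain ⟨wd, hwdD, hwdA, hwdR⟩ := hw d a b c hcycD kd
      obtain ⟨WCd, WCa, WCb, WCnd, WCna, WCnb⟩ := hWfacts c d a b wc hcycC hwcD hwcA hwcR
      obtain ⟨WDa, WDb, WDc, WDna, WDnb, WDnc⟩ := hWfacts d a b c wd hcycD hwdD hwdA hwdR
      have hRc3 : RR c d d := hRRrefl c d hdD h3.ne'
      have Mac := hWP a wc za hPza hwcD WCna
      have Mad := hWP a wd za hPza hwdD WDna
      have Mbc := hWP b wc zb hPzb hwcD WCnb
      have Mbd := hWP b wd zb hPzb hwdD WDnb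
      have Mcd := hWW c d wc wd hwcR hwdD WDnc
        (hRRstep c d d wd hwdD WDnc hwdA hRc3) hwcD hwcA.ne
      have Fab : za ≠ zb := hPP a b za zb haD hPza hPzb h1.ne
      exact buildQ2 G hfree a b c d za zb wc wd h1 h2 h3 h4
        LAa LBb hwcA.symm hwdA.symm n1 n2
        LAb LAc LAd LBa LBc LBd WCa WCb WCd WDa WDb WDc
        hzazb (fun h => Mac.1 h.symm) (fun h => Mad.1 h.symm)
        (fun h => Mbc.1 h.symm) (fun h => Mbd.1 h.symm) Mcd.1
        e1 e2
        LAnb LAnc LAnd LBna LBnc LBnd WCna WCnb WCnd WDna WDnb WDnc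
        Fab Mac.2.symm Mad.2.symm Mbc.2.symm Mbd.2.symm Mcd.2
  -- pattern: two opposite free positions (roles a, c)
  have patTwoOpp : ∀ a b c d, Cyc a b c d →
      (G.induce ((↑D : Set V) \ {a})).Connected →
      ¬(G.induce ((↑D : Set V) \ {b})).Connected →
      (G.induce ((↑D : Set V) \ {c})).Connected →
      ¬(G.induce ((↑D : Set V) \ {d})).Connected → False := by
    intro a b c d hcyc fa kb fc kd
    obtain ⟨haD,hbD,hcD,hdD,h1,h2,h3,h4,n1,n2,e1,e2⟩ := id hcyc
    have hcycB := hrot _ _ _ _ hcyc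
    have hcycC := hrot _ _ _ _ hcycB
    have hcycD := hrot _ _ _ _ hcycC
    obtain ⟨zc, hPzc⟩ := hstepA c d a b hcycC fc
    by_cases hall : ∀ z, Pp a z → G.Adj z zc
    · exact hcover1 a b c d hcyc fa zc c hPzc hcD (Ne.symm e1) hall
    · push_neg at hall
      obtain ⟨za, hPza, hzazc⟩ := hall
      obtain ⟨LAa, LAb, LAc, LAd, LAnb, LAnc, LAnd⟩ := hLP a b c d za hcyc hPza
      obtain ⟨LCc, LCd, LCa, LCb, LCnd, LCna, LCnb⟩ := hLP c d a b zc hcycC hPzc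
      obtain ⟨wb, hwbD, hwbA, hwbR⟩ := hw b c d a hcycB kb
      obtain ⟨wd, hwdD, hwdA, hwdR⟩ := hw d a b c hcycD kd
      obtain ⟨WBc, WBd, WBa, WBnc, WBnd, WBna⟩ := hWfacts b c d a wb hcycB hwbD hwbA hwbR
      obtain ⟨WDa, WDb, WDc, WDna, WDnb, WDnc⟩ := hWfacts d a b c wd hcycD hwdD hwdA hwdR
      have hRb2 : RR b c c := hRRrefl b c hcD h2.ne'
      have hRd2 : RR b d c := hRRstep b c c d hdD (fun h => e2 h.symm) h3.symm hRb2
      have Mab := hWP a wb za hPza hwbD WBna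
      have Mad := hWP a wd za hPza hwdD WDna
      have Mbc := hWP c wb zc hPzc hwbD WBnc
      have Mcd := hWP c wd zc hPzc hwdD WDnc
      have Mbd := hWW b c wb wd hwbR hwdD WDnb
        (hRRstep b c d wd hwdD WDnb hwdA hRd2) hwbD hwbA.ne
      have Fac : za ≠ zc := hPP a c za zc haD hPza hPzc e1
      exact buildQ2 G hfree a b c d za wb zc wd h1 h2 h3 h4
        LAa hwbA.symm LCc hwdA.symm n1 n2
        LAb LAc LAd WBa WBc WBd LCa LCb LCd WDa WDb WDc
        (fun h => Mab.1 h.symm) hzazc (fun h => Mad.1 h.symm)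
        Mbc.1 Mbd.1 (fun h => Mcd.1 h.symm)
        e1 e2
        LAnb LAnc LAnd WBna WBnc WBnd LCna LCnb LCnd WDna WDnb WDnc
        Mab.2.symm Fac Mad.2.symm Mbc.2 Mbd.2 Mcd.2.symm
  -- pattern: three free positions (roles a, b, c; d cut)
  have patThree : ∀ a b c d, Cyc a b c d →
      (G.induce ((↑D : Set V) \ {a})).Connected →
      (G.induce ((↑D : Set V) \ {b})).Connected →
      (G.induce ((↑D : Set V) \ {c})).Connected →
      ¬(G.induce ((↑D : Set V) \ {d})).Connected → False := by
    intro a b c d hcyc fa fb fc kd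
    obtain ⟨haD,hbD,hcD,hdD,h1,h2,h3,h4,n1,n2,e1,e2⟩ := id hcyc
    have hcycB := hrot _ _ _ _ hcyc
    have hcycC := hrot _ _ _ _ hcycB
    have hcycD := hrot _ _ _ _ hcycC
    obtain ⟨zc, hPzc⟩ := hstepA c d a b hcycC fc
    by_cases hbc : ∀ z, Pp b z → G.Adj z zc
    · exact hcover1 b c d a hcycB fb zc c hPzc hcD h2.ne' hbc
    · push_neg at hbc
      obtain ⟨zb, hPzb, hzbzc⟩ := hbc
      by_cases hza : ∀ z, Pp a z → G.Adj z zb ∨ G.Adj z zc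
      · exact hcover2 a b c d hcyc fa zb b zc c hPzb hPzc hbD hcD h1.ne' (Ne.symm e1)
          hzbzc (hPP b c zb zc hbD hPzb hPzc h2.ne) hza
      · push_neg at hza
        obtain ⟨za, hPza, hzazb, hzazc⟩ := hza
        obtain ⟨LAa, LAb, LAc, LAd, LAnb, LAnc, LAnd⟩ := hLP a b c d za hcyc hPza
        obtain ⟨LBb, LBc, LBd, LBa, LBnc, LBnd, LBna⟩ := hLP b c d a zb hcycB hPzb
        obtain ⟨LCc, LCd, LCa, LCb, LCnd, LCna, LCnb⟩ := hLP c d a b zc hcycC hPzc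
        obtain ⟨wd, hwdD, hwdA, hwdR⟩ := hw d a b c hcycD kd
        obtain ⟨WDa, WDb, WDc, WDna, WDnb, WDnc⟩ := hWfacts d a b c wd hcycD hwdD hwdA hwdR
        have Mad := hWP a wd za hPza hwdD WDna
        have Mbd := hWP b wd zb hPzb hwdD WDnb
        have Mcd := hWP c wd zc hPzc hwdD WDnc
        exact buildQ2 G hfree a b c d za zb zc wd h1 h2 h3 h4
          LAa LBb LCc hwdA.symm n1 n2
          LAb LAc LAd LBa LBc LBd LCa LCb LCd WDa WDb WDc
          hzazb hzazc (fun h => Mad.1 h.symm)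
          hzbzc (fun h => Mbd.1 h.symm) (fun h => Mcd.1 h.symm)
          e1 e2
          LAnb LAnc LAnd LBna LBnc LBnd LCna LCnb LCnd WDna WDnb WDnc
          (hPP a b za zb haD hPza hPzb h1.ne) (hPP a c za zc haD hPza hPzc e1)
          Mad.2.symm (hPP b c zb zc hbD hPzb hPzc h2.ne) Mbd.2.symm Mcd.2.symm
  -- pattern: all four positions free
  have patFour : ∀ a b c d, Cyc a b c d →
      (G.induce ((↑D : Set V) \ {a})).Connected →
      (G.induce ((↑D : Set V) \ {b})).Connected →
      (G.induce ((↑D : Set V) \ {c})).Connected →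
      (G.induce ((↑D : Set V) \ {d})).Connected → False := by
    intro a b c d hcyc fa fb fc fd
    obtain ⟨haD,hbD,hcD,hdD,h1,h2,h3,h4,n1,n2,e1,e2⟩ := id hcyc
    have hcycB := hrot _ _ _ _ hcyc
    have hcycC := hrot _ _ _ _ hcycB
    have hcycD := hrot _ _ _ _ hcycC
    obtain ⟨zd, hPzd⟩ := hstepA d a b c hcycD fd
    by_cases hcd : ∀ z, Pp c z → G.Adj z zd
    · exact hcover1 c d a b hcycC fc zd d hPzd hdD h3.ne' hcd
    · push_neg at hcd
      obtain ⟨zc, hPzc, hzczd⟩ := hcd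
      by_cases hXb : ∃ zb, Pp b zb ∧ ¬G.Adj zb zc ∧ ¬G.Adj zb zd
      · obtain ⟨zb, hPzb, hzbzc, hzbzd⟩ := hXb
        by_cases hXa : ∀ z, Pp a z → G.Adj z zc ∨ G.Adj z zd ∨ G.Adj z zb
        · exact hcover3 a b c d hcyc fa zc c zd d zb b hPzc hPzd hPzb hcD hdD hbD
            (Ne.symm e1) h4.ne h1.ne'
            hzczd (fun h => hzbzc h.symm) (fun h => hzbzd h.symm)
            (hPP c d zc zd hcD hPzc hPzd h3.ne) (Ne.symm (hPP b c zb zc hbD hPzb hPzc h2.ne))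
            (Ne.symm (hPP b d zb zd hbD hPzb hPzd (fun h => e2 h)))
            hXa
        · push_neg at hXa
          obtain ⟨za, hPza, hzazc, hzazd, hzazb⟩ := hXa
          obtain ⟨LAa, LAb, LAc, LAd, LAnb, LAnc, LAnd⟩ := hLP a b c d za hcyc hPza
          obtain ⟨LBb, LBc, LBd, LBa, LBnc, LBnd, LBna⟩ := hLP b c d a zb hcycB hPzb
          obtain ⟨LCc, LCd, LCa, LCb, LCnd, LCna, LCnb⟩ := hLP c d a b zc hcycC hPzc
          obtain ⟨LDd, LDa, LDb, LDc, LDna, LDnb, LDnc⟩ := hLP d a b c zd hcycD hPzd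
          exact buildQ2 G hfree a b c d za zb zc zd h1 h2 h3 h4
            LAa LBb LCc LDd n1 n2
            LAb LAc LAd LBa LBc LBd LCa LCb LCd LDa LDb LDc
            hzazb hzazc hzazd hzbzc hzbzd hzczd
            e1 e2
            LAnb LAnc LAnd LBna LBnc LBnd LCna LCnb LCnd LDna LDnb LDnc
            (hPP a b za zb haD hPza hPzb h1.ne) (hPP a c za zc haD hPza hPzc e1)
            (hPP a d za zd haD hPza hPzd (fun h => h4.ne h.symm))
            (hPP b c zb zc hbD hPzb hPzc h2.ne) (hPP b d zb zd hbD hPzb hPzd e2)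
            (hPP c d zc zd hcD hPzc hPzd h3.ne)
      · push_neg at hXb
        have hcov : ∀ z, Pp b z → G.Adj z zc ∨ G.Adj z zd := by
          intro z hz
          by_cases h : G.Adj z zc
          · exact Or.inl h
          · exact Or.inr (hXb z hz h)
        exact hcover2 b c d a hcycB fb zc c zd d hPzc hPzd hcD hdD h2.ne'
          (fun h => e2 h.symm) hzczd (hPP c d zc zd hcD hPzc hPzd h3.ne) hcov

  have hcyc1 := hrot _ _ _ _ hcyc0
  have hcyc2 := hrot _ _ _ _ hcyc1
  have hcyc3 := hrot _ _ _ _ hcyc2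
  by_cases f0 : (G.induce ((↑D : Set V) \ {(φ 0).1})).Connected <;>
    by_cases f1 : (G.induce ((↑D : Set V) \ {(φ 1).1})).Connected <;>
    by_cases f2 : (G.induce ((↑D : Set V) \ {(φ 2).1})).Connected <;>
    by_cases f3 : (G.induce ((↑D : Set V) \ {(φ 3).1})).Connected
  · exact patFour _ _ _ _ hcyc0 f0 f1 f2 f3
  · exact patThree _ _ _ _ hcyc0 f0 f1 f2 f3
  · exact patThree _ _ _ _ hcyc3 f3 f0 f1 f2
  · exact patTwoAdj _ _ _ _ hcyc0 f0 f1 f2 f3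
  · exact patThree _ _ _ _ hcyc2 f2 f3 f0 f1
  · exact patTwoOpp _ _ _ _ hcyc0 f0 f1 f2 f3
  · exact patTwoAdj _ _ _ _ hcyc3 f3 f0 f1 f2
  · exact patOneFree _ _ _ _ hcyc0 f0 f1 f2 f3
  · exact patThree _ _ _ _ hcyc1 f1 f2 f3 f0
  · exact patTwoAdj _ _ _ _ hcyc1 f1 f2 f3 f0
  · exact patTwoOpp _ _ _ _ hcyc1 f1 f2 f3 f0
  · exact patOneFree _ _ _ _ hcyc1 f1 f2 f3 f0
  · exact patTwoAdj _ _ _ _ hcyc2 f2 f3 f0 f1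
  · exact patOneFree _ _ _ _ hcyc2 f2 f3 f0 f1
  · exact patOneFree _ _ _ _ hcyc3 f3 f0 f1 f2
  · exact patAllCut _ _ _ _ hcyc0 f0 f1 f2 f3
end

section
/- With G, the max-blowup A = A1 ∪ ... ∪ A6, and the sets X_i, Y_i, Z_i, R, B as in the context: every vertex of G that lies outside A and has a neighbor in A belongs to B, i.e., B = N(A) and V(G) = A ∪ B ∪ R. -/
open SimpleGraph

/-- The gem: a `P4` `0-1-2-3` plus a vertex `4` adjacent to all of it. -/
def gemGraph : SimpleGraph (Fin 5) :=
  fromEdgeSet {s(0,1), s(1,2), s(2,3), s(4,0), s(4,1), s(4,2), s(4,3)}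

/-- `A 0, ..., A 5` form a blowup of a 6-cycle in `G`: nonempty pairwise
disjoint cliques, consecutive ones complete to each other, non-consecutive
ones anticomplete (indices mod 6). -/
def IsBlowupC6 {V : Type*} (G : SimpleGraph V) (A : Fin 6 → Set V) : Prop :=
  (∀ i, (A i).Nonempty) ∧
  (∀ i, G.IsClique (A i)) ∧
  (Pairwise fun i j => Disjoint (A i) (A j)) ∧
  (∀ i : Fin 6, ∀ a ∈ A i, ∀ b ∈ A (i + 1), G.Adj a b) ∧
  (∀ i j : Fin 6, j ≠ i → j ≠ i + 1 → j ≠ i - 1 → ∀ a ∈ A i, ∀ b ∈ A j, ¬ G.Adj a b)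

/-- A max-blowup of the 6-cycle: no outside vertex can be added to any `A i`. -/
def IsMaxBlowupC6 {V : Type*} (G : SimpleGraph V) (A : Fin 6 → Set V) : Prop :=
  IsBlowupC6 G A ∧
  ∀ x ∉ ⋃ i, A i, ∀ i, ¬ IsBlowupC6 G (Function.update A i (insert x (A i)))

/-- `X i`: vertices outside the blowup with a neighbor in `A i` and in
`A (i+1)`, anticomplete to the rest of the blowup. -/
def XSet {V : Type*} (G : SimpleGraph V) (A : Fin 6 → Set V) (i : Fin 6) : Set V :=
  {x | x ∉ (⋃ j, A j) ∧ (∃ a ∈ A i, G.Adj x a) ∧ (∃ a ∈ A (i + 1), G.Adj x a) ∧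
    ∀ j, j ≠ i → j ≠ i + 1 → ∀ a ∈ A j, ¬ G.Adj x a}

/-- `Y i`: vertices outside the blowup with a neighbor in `A i`,
anticomplete to the rest of the blowup. -/
def YSet {V : Type*} (G : SimpleGraph V) (A : Fin 6 → Set V) (i : Fin 6) : Set V :=
  {x | x ∉ (⋃ j, A j) ∧ (∃ a ∈ A i, G.Adj x a) ∧
    ∀ j, j ≠ i → ∀ a ∈ A j, ¬ G.Adj x a}

/-- `Z i`: vertices outside the blowup with a neighbor in `A i` and in
`A (i+3)`, anticomplete to the rest of the blowup. -/
def ZSet {V : Type*} (G : SimpleGraph V) (A : Fin 6 → Set V) (i : Fin 6) : Set V :=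
  {x | x ∉ (⋃ j, A j) ∧ (∃ a ∈ A i, G.Adj x a) ∧ (∃ a ∈ A (i + 3), G.Adj x a) ∧
    ∀ j, j ≠ i → j ≠ i + 3 → ∀ a ∈ A j, ¬ G.Adj x a}

/-- `R`: vertices outside the blowup with no neighbor in it. -/
def RSet {V : Type*} (G : SimpleGraph V) (A : Fin 6 → Set V) : Set V :=
  {x | x ∉ (⋃ j, A j) ∧ ∀ j, ∀ a ∈ A j, ¬ G.Adj x a}

lemma c4_of {V : Type*} {G : SimpleGraph V} (hC4 : IndFree G (cycleGraph 4)) {w0 w1 w2 w3 : V}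
    (h02 : w0 ≠ w2) (h13 : w1 ≠ w3)
    (e01 : G.Adj w0 w1) (e12 : G.Adj w1 w2) (e23 : G.Adj w2 w3) (e30 : G.Adj w3 w0)
    (n02 : ¬G.Adj w0 w2) (n13 : ¬G.Adj w1 w3) : False := by
  have d01 := e01.ne; have d12 := e12.ne; have d23 := e23.ne
  have d03 := e30.ne.symm
  apply hC4.false
  refine ⟨⟨![w0,w1,w2,w3], ?_⟩, ?_⟩
  · intro a b
    fin_cases a <;> fin_cases b <;>
      simp [d01, d12, d23, d03, h02, h13, d01.symm, d12.symm, d23.symm, d03.symm, h02.symm,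
        h13.symm]
  · intro a b
    fin_cases a <;> fin_cases b <;>
      simp only [Matrix.cons_val_zero, Matrix.cons_val_one, Matrix.head_cons,
        Matrix.cons_val_two, Matrix.tail_cons, Matrix.cons_val_three] <;>
      first
      | exact iff_of_false (G.loopless.irrefl _) (by decide)
      | exact iff_of_true e01 (by decide)
      | exact iff_of_true e01.symm (by decide)
      | exact iff_of_true e12 (by decide)
      | exact iff_of_true e12.symm (by decide)
      | exact iff_of_true e23 (by decide)
      | exact iff_of_true e23.symm (by decide)
      | exact iff_of_true e30 (by decide)
      | exact iff_of_true e30.symm (by decide)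
      | exact iff_of_false n02 (by decide)
      | exact iff_of_false (fun h => n02 h.symm) (by decide)
      | exact iff_of_false n13 (by decide)
      | exact iff_of_false (fun h => n13 h.symm) (by decide)

lemma gem_of {V : Type*} {G : SimpleGraph V} (hgem : IndFree G gemGraph) {p0 p1 p2 p3 q : V}
    (h02 : p0 ≠ p2) (h03 : p0 ≠ p3) (h13 : p1 ≠ p3)
    (e01 : G.Adj p0 p1) (e12 : G.Adj p1 p2) (e23 : G.Adj p2 p3)
    (q0 : G.Adj q p0) (q1 : G.Adj q p1) (q2 : G.Adj q p2) (q3 : G.Adj q p3)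
    (n02 : ¬G.Adj p0 p2) (n03 : ¬G.Adj p0 p3) (n13 : ¬G.Adj p1 p3) : False := by
  have d01 := e01.ne; have d12 := e12.ne; have d23 := e23.ne
  have dq0 := q0.ne.symm; have dq1 := q1.ne.symm; have dq2 := q2.ne.symm; have dq3 := q3.ne.symm
  apply hgem.false
  refine ⟨⟨![p0,p1,p2,p3,q], ?_⟩, ?_⟩
  · intro a b
    fin_cases a <;> fin_cases b <;>
      simp [d01, d12, d23, h02, h03, h13, dq0, dq1, dq2, dq3, d01.symm, d12.symm, d23.symm,
        h02.symm, h03.symm, h13.symm, dq0.symm, dq1.symm, dq2.symm, dq3.symm]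
  · intro a b
    fin_cases a <;> fin_cases b <;>
      simp only [Matrix.cons_val_zero, Matrix.cons_val_one, Matrix.head_cons,
        Matrix.cons_val_two, Matrix.tail_cons, Matrix.cons_val_three, Matrix.cons_val_four]
    · exact iff_of_false (G.loopless.irrefl _) (by simp [gemGraph])
    · exact iff_of_true e01 (by simp [gemGraph])
    · exact iff_of_false n02 (by simp [gemGraph])
    · exact iff_of_false n03 (by simp [gemGraph])
    · exact iff_of_true q0.symm (by simp [gemGraph])
    · exact iff_of_true e01.symm (by simp [gemGraph])
    · exact iff_of_false (G.loopless.irrefl _) (by simp [gemGraph])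
    · exact iff_of_true e12 (by simp [gemGraph])
    · exact iff_of_false n13 (by simp [gemGraph])
    · exact iff_of_true q1.symm (by simp [gemGraph])
    · exact iff_of_false (fun h => n02 h.symm) (by simp [gemGraph])
    · exact iff_of_true e12.symm (by simp [gemGraph])
    · exact iff_of_false (G.loopless.irrefl _) (by simp [gemGraph])
    · exact iff_of_true e23 (by simp [gemGraph])
    · exact iff_of_true q2.symm (by simp [gemGraph])
    · exact iff_of_false (fun h => n03 h.symm) (by simp [gemGraph])
    · exact iff_of_false (fun h => n13 h.symm) (by simp [gemGraph])
    · exact iff_of_true e23.symm (by simp [gemGraph])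
    · exact iff_of_false (G.loopless.irrefl _) (by simp [gemGraph])
    · exact iff_of_true q3.symm (by simp [gemGraph])
    · exact iff_of_true q0 (by simp [gemGraph])
    · exact iff_of_true q1 (by simp [gemGraph])
    · exact iff_of_true q2 (by simp [gemGraph])
    · exact iff_of_true q3 (by simp [gemGraph])
    · exact iff_of_false (G.loopless.irrefl _) (by simp [gemGraph])

lemma auxcomb (s : Fin 6 → Bool) (h : ∀ i, ¬(s i = true ∧ s (i+2) = true))
    (hne : ∃ i, s i = true) :
    (∃ i, s i = true ∧ s (i+1) = true ∧ ∀ j, j ≠ i → j ≠ i+1 → ¬ s j = true) ∨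
    (∃ i, s i = true ∧ ∀ j, j ≠ i → ¬ s j = true) ∨
    (∃ i, s i = true ∧ s (i+3) = true ∧ ∀ j, j ≠ i → j ≠ i+3 → ¬ s j = true) := by
  revert h hne; revert s; decide

lemma three_consec {V : Type*} {G : SimpleGraph V}
    (hC4 : IndFree G (cycleGraph 4)) (hgem : IndFree G gemGraph)
    {A : Fin 6 → Set V} (hA : IsMaxBlowupC6 G A) (i : Fin 6) {x a b c : V}
    (hx : x ∉ ⋃ j, A j) (haA : a ∈ A i) (hbA : b ∈ A (i+1)) (hcA : c ∈ A (i+2))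
    (hxa : G.Adj x a) (hxb : G.Adj x b) (hxc : G.Adj x c) : False := by
  obtain ⟨⟨hne, hcl, hdisj, hcomp, hanti⟩, hmax⟩ := hA
  have xne : ∀ (j : Fin 6) (v : V), v ∈ A j → x ≠ v := by
    intro j v hv h; exact hx (Set.mem_iUnion.2 ⟨j, h ▸ hv⟩)
  have xnm : ∀ (j : Fin 6), x ∉ A j := fun j hv => xne j x hv rfl
  have dne : ∀ (j k : Fin 6), j ≠ k → ∀ u ∈ A j, ∀ v ∈ A k, u ≠ v := by
    intro j k hjk u hu v hv huv
    exact Set.disjoint_left.mp (hdisj hjk) hu (huv ▸ hv)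
  have feq := (by decide : ∀ p : Fin 6, p+1+1 = p+2 ∧ p+2+1 = p+3 ∧ p+3+1 = p+4 ∧ p+5+1 = p) i
  have comp12 : ∀ u ∈ A (i+1), ∀ v ∈ A (i+2), G.Adj u v :=
    fun u hu v hv => hcomp (i+1) u hu v (feq.1.symm ▸ hv)
  have comp23 : ∀ u ∈ A (i+2), ∀ v ∈ A (i+3), G.Adj u v :=
    fun u hu v hv => hcomp (i+2) u hu v (feq.2.1.symm ▸ hv)
  have comp34 : ∀ u ∈ A (i+3), ∀ v ∈ A (i+4), G.Adj u v :=
    fun u hu v hv => hcomp (i+3) u hu v (feq.2.2.1.symm ▸ hv)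
  have comp50 : ∀ u ∈ A (i+5), ∀ v ∈ A i, G.Adj u v :=
    fun u hu v hv => hcomp (i+5) u hu v (feq.2.2.2.symm ▸ hv)
  have anti02 : ∀ u ∈ A i, ∀ v ∈ A (i+2), ¬G.Adj u v :=
    hanti i (i+2) ((by decide : ∀ p : Fin 6, p+2 ≠ p) i)
      ((by decide : ∀ p : Fin 6, p+2 ≠ p+1) i) ((by decide : ∀ p : Fin 6, p+2 ≠ p-1) i)
  have anti03 : ∀ u ∈ A i, ∀ v ∈ A (i+3), ¬G.Adj u v :=
    hanti i (i+3) ((by decide : ∀ p : Fin 6, p+3 ≠ p) i)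
      ((by decide : ∀ p : Fin 6, p+3 ≠ p+1) i) ((by decide : ∀ p : Fin 6, p+3 ≠ p-1) i)
  have anti13 : ∀ u ∈ A (i+1), ∀ v ∈ A (i+3), ¬G.Adj u v :=
    hanti (i+1) (i+3) ((by decide : ∀ p : Fin 6, p+3 ≠ p+1) i)
      ((by decide : ∀ p : Fin 6, p+3 ≠ p+1+1) i) ((by decide : ∀ p : Fin 6, p+3 ≠ p+1-1) i)
  have anti15 : ∀ u ∈ A (i+1), ∀ v ∈ A (i+5), ¬G.Adj u v :=
    hanti (i+1) (i+5) ((by decide : ∀ p : Fin 6, p+5 ≠ p+1) i)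
      ((by decide : ∀ p : Fin 6, p+5 ≠ p+1+1) i) ((by decide : ∀ p : Fin 6, p+5 ≠ p+1-1) i)
  have anti25 : ∀ u ∈ A (i+2), ∀ v ∈ A (i+5), ¬G.Adj u v :=
    hanti (i+2) (i+5) ((by decide : ∀ p : Fin 6, p+5 ≠ p+2) i)
      ((by decide : ∀ p : Fin 6, p+5 ≠ p+2+1) i) ((by decide : ∀ p : Fin 6, p+5 ≠ p+2-1) i)
  have anti24 : ∀ u ∈ A (i+2), ∀ v ∈ A (i+4), ¬G.Adj u v :=
    hanti (i+2) (i+4) ((by decide : ∀ p : Fin 6, p+4 ≠ p+2) i)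
      ((by decide : ∀ p : Fin 6, p+4 ≠ p+2+1) i) ((by decide : ∀ p : Fin 6, p+4 ≠ p+2-1) i)
  -- Step 1: x is complete to A (i+1)
  have hc1 : ∀ b' ∈ A (i+1), G.Adj x b' := by
    intro b' hb'
    by_contra hn
    exact c4_of hC4 (xne _ _ hb')
      (dne i (i+2) ((by decide : ∀ p : Fin 6, p ≠ p+2) i) a haA c hcA)
      hxa (hcomp i a haA b' hb') (comp12 b' hb' c hcA) hxc.symm hn (anti02 a haA c hcA)
  -- Step 2: x is complete to A i
  have hc0 : ∀ a' ∈ A i, G.Adj x a' := by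
    intro a' ha'
    by_contra hn
    have hab : a ≠ a' := fun h => hn (h ▸ hxa)
    exact gem_of hgem
      (dne (i+2) i ((by decide : ∀ p : Fin 6, p+2 ≠ p) i) c hcA a haA)
      (dne (i+2) i ((by decide : ∀ p : Fin 6, p+2 ≠ p) i) c hcA a' ha')
      (xne i a' ha')
      hxc.symm hxa (hcl i haA ha' hab)
      (comp12 b hbA c hcA) hxb.symm (hcomp i a haA b hbA).symm (hcomp i a' ha' b hbA).symm
      (fun h => anti02 a haA c hcA h.symm) (fun h => anti02 a' ha' c hcA h.symm) hn
  -- Step 3: x is complete to A (i+2)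
  have hc2 : ∀ c' ∈ A (i+2), G.Adj x c' := by
    intro c' hc'
    by_contra hn
    have hcc : c ≠ c' := fun h => hn (h ▸ hxc)
    exact gem_of hgem
      (dne i (i+2) ((by decide : ∀ p : Fin 6, p ≠ p+2) i) a haA c hcA)
      (dne i (i+2) ((by decide : ∀ p : Fin 6, p ≠ p+2) i) a haA c' hc')
      (xne (i+2) c' hc')
      hxa.symm hxc (hcl (i+2) hcA hc' hcc)
      (hcomp i a haA b hbA).symm hxb.symm (comp12 b hbA c hcA) (comp12 b hbA c' hc')
      (anti02 a haA c hcA) (anti02 a haA c' hc') hn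
  -- Step 4: x is anticomplete to A (i+5)
  have hn5 : ∀ v ∈ A (i+5), ¬G.Adj x v := by
    intro v hv hadj
    exact gem_of hgem
      (dne (i+5) (i+1) ((by decide : ∀ p : Fin 6, p+5 ≠ p+1) i) v hv b hbA)
      (dne (i+5) (i+2) ((by decide : ∀ p : Fin 6, p+5 ≠ p+2) i) v hv c hcA)
      (dne i (i+2) ((by decide : ∀ p : Fin 6, p ≠ p+2) i) a haA c hcA)
      (comp50 v hv a haA) (hcomp i a haA b hbA) (comp12 b hbA c hcA)
      hadj hxa hxb hxc
      (fun h => anti15 b hbA v hv h.symm) (fun h => anti25 c hcA v hv h.symm)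
      (anti02 a haA c hcA)
  -- Step 5: x is anticomplete to A (i+3)
  have hn3 : ∀ v ∈ A (i+3), ¬G.Adj x v := by
    intro v hv hadj
    exact gem_of hgem
      (dne (i+3) (i+1) ((by decide : ∀ p : Fin 6, p+3 ≠ p+1) i) v hv b hbA)
      (dne (i+3) i ((by decide : ∀ p : Fin 6, p+3 ≠ p) i) v hv a haA)
      (dne (i+2) i ((by decide : ∀ p : Fin 6, p+2 ≠ p) i) c hcA a haA)
      (comp23 c hcA v hv).symm (comp12 b hbA c hcA).symm (hcomp i a haA b hbA).symm
      hadj hxc hxb hxa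
      (fun h => anti13 b hbA v hv h.symm) (fun h => anti03 a haA v hv h.symm)
      (fun h => anti02 a haA c hcA h.symm)
  -- Step 6: x is anticomplete to A (i+4)
  have hn4 : ∀ v ∈ A (i+4), ¬G.Adj x v := by
    intro v hv hadj
    obtain ⟨t, ht⟩ := hne (i+3)
    exact c4_of hC4 (xne (i+3) t ht)
      (dne (i+2) (i+4) ((by decide : ∀ p : Fin 6, p+2 ≠ p+4) i) c hcA v hv)
      hxc (comp23 c hcA t ht) (comp34 t ht v hv) hadj.symm (hn3 t ht) (anti24 c hcA v hv)
  -- contradiction with maximality: add x to A (i+1)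
  apply hmax x hx (i+1)
  refine ⟨?_, ?_, ?_, ?_, ?_⟩
  · intro j
    by_cases hj : j = i+1
    · subst hj; rw [Function.update_self]; exact ⟨x, Set.mem_insert _ _⟩
    · rw [Function.update_of_ne hj]; exact hne j
  · intro j
    by_cases hj : j = i+1
    · subst hj; rw [Function.update_self]
      intro u hu w hw huw
      rcases Set.mem_insert_iff.mp hu with rfl | hu' <;>
        rcases Set.mem_insert_iff.mp hw with rfl | hw'
      · exact absurd rfl huw
      · exact hc1 w hw'
      · exact (hc1 u hu').symm
      · exact hcl (i+1) hu' hw' huw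
    · rw [Function.update_of_ne hj]; exact hcl j
  · intro j k hjk
    rw [Set.disjoint_left]
    intro u hu huk
    by_cases hj : j = i+1 <;> by_cases hk : k = i+1
    · exact hjk (hj.trans hk.symm)
    · subst hj
      rw [Function.update_self] at hu
      rw [Function.update_of_ne hk] at huk
      rcases Set.mem_insert_iff.mp hu with rfl | hu'
      · exact xnm k huk
      · exact Set.disjoint_left.mp (hdisj hjk) hu' huk
    · subst hk
      rw [Function.update_of_ne hj] at hu
      rw [Function.update_self] at huk
      rcases Set.mem_insert_iff.mp huk with rfl | huk'
      · exact xnm j hu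
      · exact Set.disjoint_left.mp (hdisj hjk) hu huk'
    · rw [Function.update_of_ne hj] at hu
      rw [Function.update_of_ne hk] at huk
      exact Set.disjoint_left.mp (hdisj hjk) hu huk
  · intro j u hu w hw
    by_cases hj : j = i+1
    · subst hj
      rw [Function.update_self] at hu
      rw [Function.update_of_ne ((by decide : ∀ p : Fin 6, p+1+1 ≠ p+1) i)] at hw
      rcases Set.mem_insert_iff.mp hu with rfl | hu'
      · exact hc2 w (feq.1 ▸ hw)
      · exact hcomp (i+1) u hu' w hw
    · by_cases hj2 : j+1 = i+1
      · have hji : j = i := (by decide : ∀ p q : Fin 6, q+1 = p+1 → q = p) i j hj2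
        subst hji
        rw [Function.update_of_ne hj] at hu
        rw [hj2, Function.update_self] at hw
        rcases Set.mem_insert_iff.mp hw with rfl | hw'
        · exact (hc0 u hu).symm
        · exact hcomp j u hu w hw'
      · rw [Function.update_of_ne hj] at hu
        rw [Function.update_of_ne hj2] at hw
        exact hcomp j u hu w hw
  · intro j k hk1 hk2 hk3 u hu w hw hadj
    by_cases hj : j = i+1 <;> by_cases hk : k = i+1
    · exact hk1 (hk.trans hj.symm)
    · subst hj
      rw [Function.update_self] at hu
      rw [Function.update_of_ne hk] at hw
      rcases Set.mem_insert_iff.mp hu with rfl | hu'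
      · have hk3' : k ≠ i := fun h =>
          hk3 (h.trans ((by decide : ∀ p : Fin 6, p = p+1-1) i))
        rcases (by decide : ∀ p q : Fin 6, q ≠ p+1 → q ≠ p+1+1 → q ≠ p →
            q = p+3 ∨ q = p+4 ∨ q = p+5) i k hk1 hk2 hk3' with rfl | rfl | rfl
        · exact hn3 w hw hadj
        · exact hn4 w hw hadj
        · exact hn5 w hw hadj
      · exact hanti (i+1) k hk1 hk2 hk3 u hu' w hw hadj
    · subst hk
      rw [Function.update_of_ne hj] at hu
      rw [Function.update_self] at hw
      rcases Set.mem_insert_iff.mp hw with rfl | hw'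
      · have hja : j ≠ i := (by decide : ∀ p q : Fin 6, p+1 ≠ q+1 → q ≠ p) i j hk2
        have hjb : j ≠ i+2 := (by decide : ∀ p q : Fin 6, p+1 ≠ q-1 → q ≠ p+2) i j hk3
        rcases (by decide : ∀ p q : Fin 6, q ≠ p+1 → q ≠ p → q ≠ p+2 →
            q = p+3 ∨ q = p+4 ∨ q = p+5) i j hj hja hjb with rfl | rfl | rfl
        · exact hn3 u hu hadj.symm
        · exact hn4 u hu hadj.symm
        · exact hn5 u hu hadj.symm
      · exact hanti j (i+1) hk1 hk2 hk3 u hu w hw' hadj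
    · rw [Function.update_of_ne hj] at hu
      rw [Function.update_of_ne hk] at hw
      exact hanti j k hk1 hk2 hk3 u hu w hw hadj

theorem stmt_6 {V : Type*} [Fintype V] (G : SimpleGraph V) (hconn : G.Connected)
    (hP7 : IndFree G (pathGraph 7)) (hC7 : IndFree G (cycleGraph 7))
    (hC4 : IndFree G (cycleGraph 4)) (hgem : IndFree G gemGraph)
    (A : Fin 6 → Set V) (hA : IsMaxBlowupC6 G A) :
    ((⋃ i, XSet G A i) ∪ (⋃ i, YSet G A i) ∪ (⋃ i, ZSet G A i)
        = {x | x ∉ (⋃ j, A j) ∧ ∃ a ∈ ⋃ j, A j, G.Adj x a}) ∧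
      (Set.univ : Set V) = (⋃ j, A j) ∪
        ((⋃ i, XSet G A i) ∪ (⋃ i, YSet G A i) ∪ (⋃ i, ZSet G A i)) ∪ RSet G A := by
  classical
  obtain ⟨⟨hne, hcl, hdisj, hcomp, hanti⟩, hmax⟩ := id hA
  have main : ∀ x : V, x ∉ (⋃ j, A j) → (∃ a ∈ ⋃ j, A j, G.Adj x a) →
      x ∈ (⋃ i, XSet G A i) ∪ (⋃ i, YSet G A i) ∪ (⋃ i, ZSet G A i) := by
    rintro x hx ⟨a0, ha0U, hxa0⟩
    have xne : ∀ (j : Fin 6) (v : V), v ∈ A j → x ≠ v := by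
      intro j v hv h; exact hx (Set.mem_iUnion.2 ⟨j, h ▸ hv⟩)
    have dne : ∀ (j k : Fin 6), j ≠ k → ∀ u ∈ A j, ∀ v ∈ A k, u ≠ v := by
      intro j k hjk u hu v hv huv
      exact Set.disjoint_left.mp (hdisj hjk) hu (huv ▸ hv)
    have hs2 : ∀ j : Fin 6, ¬((∃ a ∈ A j, G.Adj x a) ∧ (∃ a ∈ A (j+2), G.Adj x a)) := by
      rintro j ⟨⟨a, haA, hxa⟩, ⟨c, hcA, hxc⟩⟩
      by_cases hmid : ∃ b ∈ A (j+1), G.Adj x b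
      · obtain ⟨b, hbA, hxb⟩ := hmid
        exact three_consec hC4 hgem hA j hx haA hbA hcA hxa hxb hxc
      · push_neg at hmid
        obtain ⟨v, hv⟩ := hne (j+1)
        have feq := (by decide : ∀ p : Fin 6, p+1+1 = p+2) j
        exact c4_of hC4 (xne (j+1) v hv)
          (dne j (j+2) ((by decide : ∀ p : Fin 6, p ≠ p+2) j) a haA c hcA)
          hxa (hcomp j a haA v hv) (hcomp (j+1) v hv c (feq.symm ▸ hcA)) hxc.symm
          (hmid v hv)
          (hanti j (j+2) ((by decide : ∀ p : Fin 6, p+2 ≠ p) j)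
            ((by decide : ∀ p : Fin 6, p+2 ≠ p+1) j)
            ((by decide : ∀ p : Fin 6, p+2 ≠ p-1) j) a haA c hcA)
    set s : Fin 6 → Bool := fun j => decide (∃ a ∈ A j, G.Adj x a) with hs
    have hsiff : ∀ j, s j = true ↔ (∃ a ∈ A j, G.Adj x a) := by
      intro j; simp [hs]
    have hS2 : ∀ j, ¬(s j = true ∧ s (j+2) = true) := by
      intro j ⟨h1, h2⟩
      exact hs2 j ⟨(hsiff j).1 h1, (hsiff (j+2)).1 h2⟩
    have hSne : ∃ j, s j = true := by
      obtain ⟨j, hj⟩ := Set.mem_iUnion.mp ha0U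
      exact ⟨j, (hsiff j).2 ⟨a0, hj, hxa0⟩⟩
    rcases auxcomb s hS2 hSne with ⟨i, h1, h2, h3⟩ | ⟨i, h1, h2⟩ | ⟨i, h1, h2, h3⟩
    · refine Or.inl (Or.inl (Set.mem_iUnion.2 ⟨i, ?_⟩))
      exact ⟨hx, (hsiff i).1 h1, (hsiff (i+1)).1 h2,
        fun j hj1 hj2 a' ha' hadj => h3 j hj1 hj2 ((hsiff j).2 ⟨a', ha', hadj⟩)⟩
    · refine Or.inl (Or.inr (Set.mem_iUnion.2 ⟨i, ?_⟩))
      exact ⟨hx, (hsiff i).1 h1,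
        fun j hj1 a' ha' hadj => h2 j hj1 ((hsiff j).2 ⟨a', ha', hadj⟩)⟩
    · refine Or.inr (Set.mem_iUnion.2 ⟨i, ?_⟩)
      exact ⟨hx, (hsiff i).1 h1, (hsiff (i+3)).1 h2,
        fun j hj1 hj2 a' ha' hadj => h3 j hj1 hj2 ((hsiff j).2 ⟨a', ha', hadj⟩)⟩
  constructor
  · ext x
    constructor
    · rintro ((h | h) | h) <;> obtain ⟨i, hxi⟩ := Set.mem_iUnion.mp h
      · obtain ⟨h1, ⟨a, ha, hadj⟩, -, -⟩ := hxi
        exact ⟨h1, a, Set.mem_iUnion.2 ⟨i, ha⟩, hadj⟩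
      · obtain ⟨h1, ⟨a, ha, hadj⟩, -⟩ := hxi
        exact ⟨h1, a, Set.mem_iUnion.2 ⟨i, ha⟩, hadj⟩
      · obtain ⟨h1, ⟨a, ha, hadj⟩, -, -⟩ := hxi
        exact ⟨h1, a, Set.mem_iUnion.2 ⟨i, ha⟩, hadj⟩
    · rintro ⟨hx, hnb⟩
      exact main x hx hnb
  · ext x
    simp only [Set.mem_univ, true_iff]
    by_cases h1 : x ∈ ⋃ j, A j
    · exact Or.inl (Or.inl h1)
    · by_cases h2 : ∃ a ∈ ⋃ j, A j, G.Adj x a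
      · exact Or.inl (Or.inr (main x h1 h2))
      · exact Or.inr ⟨h1, fun j a ha hadj => h2 ⟨a, Set.mem_iUnion.2 ⟨j, ha⟩, hadj⟩⟩
end

section
/- With G, the max-blowup A = A1 ∪ ... ∪ A6, and the sets X_i as in the context: for each i (mod 6), every vertex of X_i is adjacent to every vertex of A_i ∪ A_{i+1}. -/
open SimpleGraph

lemma gem_adj_iff (a b : Fin 5) : gemGraph.Adj a b ↔
    ((a = 0 ∧ b = 1) ∨ (a = 1 ∧ b = 0) ∨ (a = 1 ∧ b = 2) ∨ (a = 2 ∧ b = 1) ∨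
     (a = 2 ∧ b = 3) ∨ (a = 3 ∧ b = 2) ∨ (a = 4 ∧ b ≠ 4) ∨ (b = 4 ∧ a ≠ 4)) := by
  simp only [gemGraph, fromEdgeSet_adj, Set.mem_insert_iff, Set.mem_singleton_iff,
    Sym2.eq_iff]
  fin_cases a <;> fin_cases b <;> decide

lemma gem_hit {V : Type*} (G : SimpleGraph V)
    (v0 v1 v2 v3 v4 : V)
    (h01 : G.Adj v0 v1) (h12 : G.Adj v1 v2) (h23 : G.Adj v2 v3)
    (h40 : G.Adj v4 v0) (h41 : G.Adj v4 v1) (h42 : G.Adj v4 v2) (h43 : G.Adj v4 v3)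
    (n02 : ¬ G.Adj v0 v2) (n03 : ¬ G.Adj v0 v3) (n13 : ¬ G.Adj v1 v3) :
    Nonempty (gemGraph ↪g G) := by
  have e02 : v0 ≠ v2 := fun h => n03 (h ▸ h23)
  have e03 : v0 ≠ v3 := fun h => n13 (h ▸ h01.symm)
  have e13 : v1 ≠ v3 := fun h => n03 (h ▸ h01)
  refine ⟨⟨⟨![v0,v1,v2,v3,v4], ?_⟩, ?_⟩⟩
  · intro a b hab
    fin_cases a <;> fin_cases b <;>
      simp_all [h01.ne, h12.ne, h23.ne, h40.ne, h41.ne, h42.ne, h43.ne]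
  · intro a b
    show G.Adj (![v0,v1,v2,v3,v4] a) (![v0,v1,v2,v3,v4] b) ↔ _
    rw [gem_adj_iff]
    fin_cases a <;> fin_cases b <;>
      simp [h01, h12, h23, h40, h41, h42, h43, h01.symm, h12.symm, h23.symm,
        h40.symm, h41.symm, h42.symm, h43.symm, n02, n03, n13, G.irrefl] <;>
      first
        | exact fun h => n02 h.symm
        | exact fun h => n03 h.symm
        | exact fun h => n13 h.symm

theorem stmt_7 {V : Type*} [Fintype V] (G : SimpleGraph V) (hconn : G.Connected)
    (hP7 : IndFree G (pathGraph 7)) (hC7 : IndFree G (cycleGraph 7))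
    (hC4 : IndFree G (cycleGraph 4)) (hgem : IndFree G gemGraph)
    (A : Fin 6 → Set V) (hA : IsMaxBlowupC6 G A) :
    ∀ i : Fin 6, ∀ x ∈ XSet G A i, ∀ a ∈ A i ∪ A (i + 1), G.Adj x a := by
  obtain ⟨⟨hne, hclique, hdisj, hcomp, hanti⟩, -⟩ := hA
  intro i x hx a ha
  obtain ⟨-, ⟨a0, ha0, hxa0⟩, ⟨b0, hb0, hxb0⟩, hanti_x⟩ := hx
  by_contra hax
  rcases ha with ha | ha
  · -- a ∈ A i, nonadjacent to x.  Gem: P4  d - a - b0 - x, apex a0.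
    obtain ⟨d, hd⟩ := hne (i - 1)
    have hne_aa0 : a ≠ a0 := fun h => hax (h ▸ hxa0)
    have hda : G.Adj d a := hcomp (i - 1) d hd a (by rwa [sub_add_cancel])
    have hab0 : G.Adj a b0 := hcomp i a ha b0 hb0
    have h40 : G.Adj a0 d := (hcomp (i - 1) d hd a0 (by rwa [sub_add_cancel])).symm
    have h41 : G.Adj a0 a := (hclique i ha ha0 hne_aa0).symm
    have h42 : G.Adj a0 b0 := hcomp i a0 ha0 b0 hb0
    have n02 : ¬ G.Adj d b0 :=
      hanti (i - 1) (i + 1) (by omega) (by rw [sub_add_cancel]; omega)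
        (by omega) d hd b0 hb0
    have n03 : ¬ G.Adj d x := fun h =>
      hanti_x (i - 1) (by omega) (by omega) d hd h.symm
    exact hgem.false
      (gem_hit G d a b0 x a0 hda hab0 hxb0.symm h40 h41 h42 hxa0.symm
        n02 n03 (fun h => hax h.symm)).some
  · -- a ∈ A (i+1), nonadjacent to x.  Gem: P4  e - a - a0 - x, apex b0.
    obtain ⟨e, he⟩ := hne (i + 2)
    have hne_ab0 : a ≠ b0 := fun h => hax (h ▸ hxb0)
    have hea : G.Adj e a := (hcomp (i + 1) a ha e (by rw [show i+1+1 = i+2 by rw [add_assoc]; rfl]; exact he)).symm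
    have haa0 : G.Adj a a0 := (hcomp i a0 ha0 a ha).symm
    have h40 : G.Adj b0 e := hcomp (i + 1) b0 hb0 e (by rw [show i+1+1 = i+2 by rw [add_assoc]; rfl]; exact he)
    have h41 : G.Adj b0 a := (hclique (i + 1) ha hb0 hne_ab0).symm
    have h42 : G.Adj b0 a0 := (hcomp i a0 ha0 b0 hb0).symm
    have n02 : ¬ G.Adj e a0 := fun h =>
      hanti i (i + 2) (by omega) (by omega) (by omega) a0 ha0 e he h.symm
    have n03 : ¬ G.Adj e x := fun h =>
      hanti_x (i + 2) (by omega) (by omega) e he h.symm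
    exact hgem.false
      (gem_hit G e a a0 x b0 hea haa0 hxa0.symm h40 h41 h42 hxb0.symm
        n02 n03 (fun h => hax h.symm)).some
end

section
/- With G, the max-blowup A = A1 ∪ ... ∪ A6, and the sets X_i, Y_i as in the context: for each i (mod 6), at least one of the sets X_i and X_{i+1} ∪ X_{i-1} is empty, at least one of X_i and Y_{i+2} ∪ Y_{i-1} is empty, and at least one of Y_i and Y_{i+2} ∪ Y_{i-2} is empty. -/
open SimpleGraph

/-- Key configuration lemma: seven vertices forming an induced path
`x - p1 - p2 - p3 - p4 - p5 - y` (with the adjacency of `x` and `y`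
undetermined) yield an induced `P7` or `C7`, a contradiction. -/
lemma master_path {V : Type*} (G : SimpleGraph V)
    (hP7 : IndFree G (pathGraph 7)) (hC7 : IndFree G (cycleGraph 7))
    {x p1 p2 p3 p4 p5 y : V}
    (dx2 : x ≠ p2) (dx3 : x ≠ p3) (dx4 : x ≠ p4) (dx5 : x ≠ p5)
    (d13 : p1 ≠ p3) (d14 : p1 ≠ p4) (d15 : p1 ≠ p5)
    (d24 : p2 ≠ p4) (d25 : p2 ≠ p5) (d35 : p3 ≠ p5)
    (d1y : p1 ≠ y) (d2y : p2 ≠ y) (d3y : p3 ≠ y) (d4y : p4 ≠ y)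
    (a01 : G.Adj x p1) (a12 : G.Adj p1 p2) (a23 : G.Adj p2 p3)
    (a34 : G.Adj p3 p4) (a45 : G.Adj p4 p5) (a56 : G.Adj p5 y)
    (n02 : ¬ G.Adj x p2) (n03 : ¬ G.Adj x p3) (n04 : ¬ G.Adj x p4) (n05 : ¬ G.Adj x p5)
    (n13 : ¬ G.Adj p1 p3) (n14 : ¬ G.Adj p1 p4) (n15 : ¬ G.Adj p1 p5) (n16 : ¬ G.Adj p1 y)
    (n24 : ¬ G.Adj p2 p4) (n25 : ¬ G.Adj p2 p5) (n26 : ¬ G.Adj p2 y)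
    (n35 : ¬ G.Adj p3 p5) (n36 : ¬ G.Adj p3 y) (n46 : ¬ G.Adj p4 y) : False := by
  have dxy : x ≠ y := fun h => n16 (show G.Adj p1 y from (h ▸ a01).symm)
  have dx1 := a01.ne
  have d12 := a12.ne; have d23 := a23.ne; have d34 := a34.ne; have d45 := a45.ne
  have d5y := a56.ne
  have s10 := a01.symm; have s21 := a12.symm; have s32 := a23.symm
  have s43 := a34.symm; have s54 := a45.symm; have s65 := a56.symm
  have m20 : ¬ G.Adj p2 x := fun h => n02 h.symm
  have m30 : ¬ G.Adj p3 x := fun h => n03 h.symm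
  have m40 : ¬ G.Adj p4 x := fun h => n04 h.symm
  have m50 : ¬ G.Adj p5 x := fun h => n05 h.symm
  have m31 : ¬ G.Adj p3 p1 := fun h => n13 h.symm
  have m41 : ¬ G.Adj p4 p1 := fun h => n14 h.symm
  have m51 : ¬ G.Adj p5 p1 := fun h => n15 h.symm
  have m61 : ¬ G.Adj y p1 := fun h => n16 h.symm
  have m42 : ¬ G.Adj p4 p2 := fun h => n24 h.symm
  have m52 : ¬ G.Adj p5 p2 := fun h => n25 h.symm
  have m62 : ¬ G.Adj y p2 := fun h => n26 h.symm
  have m53 : ¬ G.Adj p5 p3 := fun h => n35 h.symm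
  have m63 : ¬ G.Adj y p3 := fun h => n36 h.symm
  have m64 : ¬ G.Adj y p4 := fun h => n46 h.symm
  have winj : Function.Injective (![x, p1, p2, p3, p4, p5, y] : Fin 7 → V) := by
    intro a b
    fin_cases a <;> fin_cases b <;> intro hab <;>
      first
        | rfl
        | exact absurd hab (by first
            | exact dx1 | exact dx2 | exact dx3 | exact dx4 | exact dx5 | exact dxy
            | exact d12 | exact d13 | exact d14 | exact d15 | exact d1y
            | exact d23 | exact d24 | exact d25 | exact d2y
            | exact d34 | exact d35 | exact d3y | exact d45 | exact d4y | exact d5y)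
        | exact absurd hab.symm (by first
            | exact dx1 | exact dx2 | exact dx3 | exact dx4 | exact dx5 | exact dxy
            | exact d12 | exact d13 | exact d14 | exact d15 | exact d1y
            | exact d23 | exact d24 | exact d25 | exact d2y
            | exact d34 | exact d35 | exact d3y | exact d45 | exact d4y | exact d5y)
  by_cases hxy : G.Adj x y
  · have myx : G.Adj y x := hxy.symm
    exact hC7.false ⟨⟨![x, p1, p2, p3, p4, p5, y], winj⟩, by
      intro a b
      rw [cycleGraph_adj]
      fin_cases a <;> fin_cases b <;>
        first
          | exact iff_of_true (by first
              | exact a01 | exact s10 | exact a12 | exact s21 | exact a23 | exact s32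
              | exact a34 | exact s43 | exact a45 | exact s54 | exact a56 | exact s65
              | exact hxy | exact myx) (by decide)
          | exact iff_of_false (by first
              | exact n02 | exact n03 | exact n04 | exact n05 | exact n13 | exact n14
              | exact n15 | exact n16 | exact n24 | exact n25 | exact n26 | exact n35
              | exact n36 | exact n46
              | exact m20 | exact m30 | exact m40 | exact m50 | exact m31 | exact m41
              | exact m51 | exact m61 | exact m42 | exact m52 | exact m62 | exact m53
              | exact m63 | exact m64
              | exact fun h => G.irrefl h) (by decide)⟩
  · have myx : ¬ G.Adj y x := fun h => hxy h.symm
    exact hP7.false ⟨⟨![x, p1, p2, p3, p4, p5, y], winj⟩, by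
      intro a b
      rw [pathGraph_adj]
      fin_cases a <;> fin_cases b <;>
        first
          | exact iff_of_true (by first
              | exact a01 | exact s10 | exact a12 | exact s21 | exact a23 | exact s32
              | exact a34 | exact s43 | exact a45 | exact s54 | exact a56 | exact s65) (by decide)
          | exact iff_of_false (by first
              | exact n02 | exact n03 | exact n04 | exact n05 | exact n13 | exact n14
              | exact n15 | exact n16 | exact n24 | exact n25 | exact n26 | exact n35
              | exact n36 | exact n46 | exact hxy | exact myx
              | exact m20 | exact m30 | exact m40 | exact m50 | exact m31 | exact m41
              | exact m51 | exact m61 | exact m42 | exact m52 | exact m62 | exact m53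
              | exact m63 | exact m64
              | exact fun h => G.irrefl h) (by decide)⟩

/-- Bridge lemma: if `x` has a neighbor in `A j` and is anticomplete to the four
blocks `A (j-1), ..., A (j-4)`, while `y` has a neighbor in `A (j-4)` and is
anticomplete to `A j, ..., A (j-3)`, then walking through the blowup we obtain
an induced `P7` or `C7`, a contradiction. -/
lemma master_blowup {V : Type*} (G : SimpleGraph V)
    (hP7 : IndFree G (pathGraph 7)) (hC7 : IndFree G (cycleGraph 7))
    (A : Fin 6 → Set V) (hB : IsBlowupC6 G A) (j : Fin 6) {x y : V}
    (hxA : x ∉ ⋃ i, A i) (hyA : y ∉ ⋃ i, A i)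
    (hx0 : ∃ a ∈ A j, G.Adj x a)
    (hx1 : ∀ a ∈ A (j - 1), ¬ G.Adj x a)
    (hx2 : ∀ a ∈ A (j - 2), ¬ G.Adj x a)
    (hx3 : ∀ a ∈ A (j - 3), ¬ G.Adj x a)
    (hx4 : ∀ a ∈ A (j - 4), ¬ G.Adj x a)
    (hy4 : ∃ a ∈ A (j - 4), G.Adj y a)
    (hy0 : ∀ a ∈ A j, ¬ G.Adj y a)
    (hy1 : ∀ a ∈ A (j - 1), ¬ G.Adj y a)
    (hy2 : ∀ a ∈ A (j - 2), ¬ G.Adj y a)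
    (hy3 : ∀ a ∈ A (j - 3), ¬ G.Adj y a) : False := by
  obtain ⟨hne, -, hdisj, hcomp, hanti⟩ := hB
  obtain ⟨p1, hp1, ha01⟩ := hx0
  obtain ⟨p2, hp2⟩ := hne (j - 1)
  obtain ⟨p3, hp3⟩ := hne (j - 2)
  obtain ⟨p4, hp4⟩ := hne (j - 3)
  obtain ⟨p5, hp5, ha56⟩ := hy4
  have hxm : ∀ i : Fin 6, ∀ a ∈ A i, x ≠ a := fun i a ha h =>
    hxA (Set.mem_iUnion.2 ⟨i, h ▸ ha⟩)
  have hym : ∀ i : Fin 6, ∀ a ∈ A i, y ≠ a := fun i a ha h =>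
    hyA (Set.mem_iUnion.2 ⟨i, h ▸ ha⟩)
  have dmem : ∀ i k : Fin 6, i ≠ k → ∀ p ∈ A i, ∀ q ∈ A k, p ≠ q := fun i k hik p hp q hq h =>
    Set.disjoint_left.1 (hdisj hik) hp (h ▸ hq)
  have e1 : j - 1 + 1 = j := by omega
  have e2 : j - 2 + 1 = j - 1 := by omega
  have e3 : j - 3 + 1 = j - 2 := by omega
  have e4 : j - 4 + 1 = j - 3 := by omega
  refine master_path G hP7 hC7
    (hxm _ p2 hp2) (hxm _ p3 hp3) (hxm _ p4 hp4) (hxm _ p5 hp5)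
    (dmem j (j-2) (by omega) p1 hp1 p3 hp3)
    (dmem j (j-3) (by omega) p1 hp1 p4 hp4)
    (dmem j (j-4) (by omega) p1 hp1 p5 hp5)
    (dmem (j-1) (j-3) (by omega) p2 hp2 p4 hp4)
    (dmem (j-1) (j-4) (by omega) p2 hp2 p5 hp5)
    (dmem (j-2) (j-4) (by omega) p3 hp3 p5 hp5)
    (hym j p1 hp1).symm (hym _ p2 hp2).symm (hym _ p3 hp3).symm (hym _ p4 hp4).symm
    ha01
    (hcomp (j-1) p2 hp2 p1 (by rw [e1]; exact hp1)).symm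
    (hcomp (j-2) p3 hp3 p2 (by rw [e2]; exact hp2)).symm
    (hcomp (j-3) p4 hp4 p3 (by rw [e3]; exact hp3)).symm
    (hcomp (j-4) p5 hp5 p4 (by rw [e4]; exact hp4)).symm
    ha56.symm
    (hx1 p2 hp2) (hx2 p3 hp3) (hx3 p4 hp4) (hx4 p5 hp5)
    (hanti j (j-2) (by omega) (by omega) (by omega) p1 hp1 p3 hp3)
    (hanti j (j-3) (by omega) (by omega) (by omega) p1 hp1 p4 hp4)
    (hanti j (j-4) (by omega) (by omega) (by omega) p1 hp1 p5 hp5)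
    (fun h => hy0 p1 hp1 h.symm)
    (hanti (j-1) (j-3) (by omega) (by omega) (by omega) p2 hp2 p4 hp4)
    (hanti (j-1) (j-4) (by omega) (by omega) (by omega) p2 hp2 p5 hp5)
    (fun h => hy1 p2 hp2 h.symm)
    (hanti (j-2) (j-4) (by omega) (by omega) (by omega) p3 hp3 p5 hp5)
    (fun h => hy2 p3 hp3 h.symm)
    (fun h => hy3 p4 hp4 h.symm)

theorem stmt_8 {V : Type*} [Fintype V] (G : SimpleGraph V) (hconn : G.Connected)
    (hP7 : IndFree G (pathGraph 7)) (hC7 : IndFree G (cycleGraph 7))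
    (hC4 : IndFree G (cycleGraph 4)) (hgem : IndFree G gemGraph)
    (A : Fin 6 → Set V) (hA : IsMaxBlowupC6 G A) :
    ∀ i : Fin 6,
      (XSet G A i = ∅ ∨ XSet G A (i + 1) ∪ XSet G A (i - 1) = ∅) ∧
      (XSet G A i = ∅ ∨ YSet G A (i + 2) ∪ YSet G A (i - 1) = ∅) ∧
      (YSet G A i = ∅ ∨ YSet G A (i + 2) ∪ YSet G A (i - 2) = ∅) := by
  obtain ⟨hB, -⟩ := hA
  intro i
  refine ⟨?_, ?_, ?_⟩
  · rcases Set.eq_empty_or_nonempty (XSet G A i) with h | ⟨x, hx⟩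
    · exact Or.inl h
    · right
      obtain ⟨hxA, hxa, hxb, hxanti⟩ := hx
      rw [Set.union_empty_iff]
      constructor <;> rw [Set.eq_empty_iff_forall_notMem] <;> intro y hy
      · obtain ⟨hyA, hya, hyb, hyanti⟩ := hy
        exact master_blowup G hP7 hC7 A hB i hxA hyA hxa
          (hxanti _ (by omega) (by omega)) (hxanti _ (by omega) (by omega))
          (hxanti _ (by omega) (by omega)) (hxanti _ (by omega) (by omega))
          ((show i + 1 + 1 = i - 4 by omega) ▸ hyb)
          (hyanti _ (by omega) (by omega)) (hyanti _ (by omega) (by omega))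
          (hyanti _ (by omega) (by omega)) (hyanti _ (by omega) (by omega))
      · obtain ⟨hyA, hya, hyb, hyanti⟩ := hy
        exact master_blowup G hP7 hC7 A hB (i - 1) hyA hxA hya
          (hyanti _ (by omega) (by omega)) (hyanti _ (by omega) (by omega))
          (hyanti _ (by omega) (by omega)) (hyanti _ (by omega) (by omega))
          ((show i + 1 = i - 1 - 4 by omega) ▸ hxb)
          (hxanti _ (by omega) (by omega)) (hxanti _ (by omega) (by omega))
          (hxanti _ (by omega) (by omega)) (hxanti _ (by omega) (by omega))
  · rcases Set.eq_empty_or_nonempty (XSet G A i) with h | ⟨x, hx⟩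
    · exact Or.inl h
    · right
      obtain ⟨hxA, hxa, hxb, hxanti⟩ := hx
      rw [Set.union_empty_iff]
      constructor <;> rw [Set.eq_empty_iff_forall_notMem] <;> intro y hy
      · obtain ⟨hyA, hya, hyanti⟩ := hy
        exact master_blowup G hP7 hC7 A hB i hxA hyA hxa
          (hxanti _ (by omega) (by omega)) (hxanti _ (by omega) (by omega))
          (hxanti _ (by omega) (by omega)) (hxanti _ (by omega) (by omega))
          ((show i + 2 = i - 4 by omega) ▸ hya)
          (hyanti _ (by omega)) (hyanti _ (by omega))
          (hyanti _ (by omega)) (hyanti _ (by omega))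
      · obtain ⟨hyA, hya, hyanti⟩ := hy
        exact master_blowup G hP7 hC7 A hB (i - 1) hyA hxA hya
          (hyanti _ (by omega)) (hyanti _ (by omega))
          (hyanti _ (by omega)) (hyanti _ (by omega))
          ((show i + 1 = i - 1 - 4 by omega) ▸ hxb)
          (hxanti _ (by omega) (by omega)) (hxanti _ (by omega) (by omega))
          (hxanti _ (by omega) (by omega)) (hxanti _ (by omega) (by omega))
  · rcases Set.eq_empty_or_nonempty (YSet G A i) with h | ⟨x, hx⟩
    · exact Or.inl h
    · right
      obtain ⟨hxA, hxa, hxanti⟩ := hx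
      rw [Set.union_empty_iff]
      constructor <;> rw [Set.eq_empty_iff_forall_notMem] <;> intro y hy
      · obtain ⟨hyA, hya, hyanti⟩ := hy
        exact master_blowup G hP7 hC7 A hB i hxA hyA hxa
          (hxanti _ (by omega)) (hxanti _ (by omega))
          (hxanti _ (by omega)) (hxanti _ (by omega))
          ((show i + 2 = i - 4 by omega) ▸ hya)
          (hyanti _ (by omega)) (hyanti _ (by omega))
          (hyanti _ (by omega)) (hyanti _ (by omega))
      · obtain ⟨hyA, hya, hyanti⟩ := hy
        exact master_blowup G hP7 hC7 A hB (i - 2) hyA hxA hya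
          (hyanti _ (by omega)) (hyanti _ (by omega))
          (hyanti _ (by omega)) (hyanti _ (by omega))
          ((show i = i - 2 - 4 by omega) ▸ hxa)
          (hxanti _ (by omega)) (hxanti _ (by omega))
          (hxanti _ (by omega)) (hxanti _ (by omega))
end
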